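/- arXiv:1410.6081 — 7 statements merged into one kernel-verified Lean document; each statement's English description precedes it below -/
import Mathlib

section
/- Let F be a free filter on ℕ and F* = ⋂_{A∈F} A* ⊆ ℕ*. Then F* is a minimal right ideal of (βℕ, +) if and only if F is a Θ-ultrafilter, i.e., every member of F is thick and F is maximal among free filters all of whose members are thick (equivalently, F is an ultrafilter on the partial order of thick sets modulo finite ordered by ⊆*). -/
open Filter Set Topology

noncomputable section

/-- `βℕ`: the space of ultrafilters on `ℕ` (the Stone–Čech compactification of `ℕ`). -/
abbrev βN := Ultrafilter ℕ

/-- `ℕ* = βℕ ∖ ℕ`: the free (nonprincipal) ultrafilters, i.e. those containing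
every cofinite set. -/
def NStar : Set βN := {p | (p : Filter ℕ) ≤ Filter.cofinite}

/-- The shift map `σ : βℕ → βℕ`, the pushforward under `n ↦ n + 1`. -/
def shift (p : βN) : βN := p.map (· + 1)

/-- Addition on `βℕ`: `A ∈ p + q ↔ {n | A − n ∈ p} ∈ q`, where `A − n = {m | m + n ∈ A}`. -/
def addU (p q : βN) : βN := q.bind fun n => p.map (· + n)

/-- A right ideal of `(βℕ, +)`: `I + βℕ ⊆ I`. -/
def IsRightIdeal (I : Set βN) : Prop := ∀ p ∈ I, ∀ q : βN, addU p q ∈ I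

/-- A minimal right ideal: a nonempty right ideal not properly containing any
other (nonempty) right ideal. -/
def IsMinRightIdeal (I : Set βN) : Prop :=
  I.Nonempty ∧ IsRightIdeal I ∧
    ∀ J : Set βN, J.Nonempty → IsRightIdeal J → J ⊆ I → J = I

/-- `A* = {p ∈ ℕ* | A ∈ p}`, as a subset of the subspace `ℕ*`. -/
def starSet (A : Set ℕ) : Set ↥NStar := {p | A ∈ (p : βN)}

/-- `F* = ⋂_{A ∈ F} A*` for a (free) filter `F` on `ℕ`. -/
def filterStar (F : Filter ℕ) : Set βN := ⋂ A ∈ F, {p : βN | A ∈ p}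

/-- A closed `P`-set of the space `ℕ*`: for every countable collection of open
sets containing `X`, `X` is contained in the interior of the intersection. -/
def IsPSetSub (X : Set ↥NStar) : Prop :=
  IsClosed X ∧ ∀ 𝒜 : Set (Set ↥NStar), 𝒜.Countable →
    (∀ U ∈ 𝒜, IsOpen U ∧ X ⊆ U) → X ⊆ interior (⋂₀ 𝒜)

/-- A subset of `βℕ` which lies in `ℕ*` and is a closed `P`-set of `ℕ*`. -/
def IsPSetIn (X : Set βN) : Prop :=
  X ⊆ NStar ∧ IsPSetSub (Subtype.val ⁻¹' X)

/-- `A ⊆ ℕ` is thick if it contains arbitrarily long intervals. -/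
def Thick (A : Set ℕ) : Prop := ∀ k : ℕ, ∃ n : ℕ, Set.Icc n (n + k) ⊆ A

/-- `A ⊆* B`: `A ∖ B` is finite. -/
def almostSub (A B : Set ℕ) : Prop := (A \ B).Finite

/-- The tower number `𝔱`: the least cardinality of a `⊆*`-chain of infinite subsets
of `ℕ` with no infinite pseudo-intersection. -/
def towerNum : Cardinal :=
  sInf {c : Cardinal | ∃ C : Set (Set ℕ), c = Cardinal.mk ↥C ∧ (∀ A ∈ C, A.Infinite) ∧
    IsChain almostSub C ∧ ¬∃ B : Set ℕ, B.Infinite ∧ ∀ A ∈ C, almostSub B A}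

/-- `𝔱_Θ`: the least cardinality of a `⊆*`-chain of thick subsets of `ℕ` with no
thick `⊆*`-lower bound. -/
def towerNumTheta : Cardinal :=
  sInf {c : Cardinal | ∃ C : Set (Set ℕ), c = Cardinal.mk ↥C ∧ (∀ A ∈ C, Thick A) ∧
    IsChain almostSub C ∧ ¬∃ B : Set ℕ, Thick B ∧ ∀ A ∈ C, almostSub B A}

/-- The pseudo-intersection number `𝔭`: the least cardinality of a filter base of
infinite subsets of `ℕ` (all finite intersections infinite) with no infinite
pseudo-intersection. -/
def pNum : Cardinal :=
  sInf {c : Cardinal | ∃ C : Set (Set ℕ), c = Cardinal.mk ↥C ∧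
    (∀ S : Finset (Set ℕ), ↑S ⊆ C → (⋂ A ∈ S, A : Set ℕ).Infinite) ∧
    ¬∃ B : Set ℕ, B.Infinite ∧ ∀ A ∈ C, almostSub B A}

/-- Chain transitivity for a dynamical system on a topological space, via open
covers: for every open cover `𝒰` and all `x, y` there is a `𝒰`-chain from `x` to `y`. -/
def ChainTransitive {X : Type*} [TopologicalSpace X] (f : X → X) : Prop :=
  ∀ 𝒰 : Set (Set X), (∀ U ∈ 𝒰, IsOpen U) → ⋃₀ 𝒰 = Set.univ →
    ∀ x y : X, ∃ (n : ℕ) (c : ℕ → X), c 0 = x ∧ c n = y ∧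
      ∀ i < n, ∃ U ∈ 𝒰, f (c i) ∈ U ∧ c (i + 1) ∈ U

lemma shift_mem_NStar {p : βN} (hp : p ∈ NStar) : shift p ∈ NStar := by
  have h1 : Filter.Tendsto (· + 1) Filter.cofinite Filter.cofinite :=
    Function.Injective.tendsto_cofinite (add_left_injective 1)
  simp only [NStar, Set.mem_setOf_eq, shift, Ultrafilter.coe_map] at *
  exact (Filter.map_mono hp).trans h1

/-- The shift map restricted to `ℕ*`. -/
def shiftStar (p : ↥NStar) : ↥NStar := ⟨shift p.1, shift_mem_NStar p.2⟩

/- ### auxiliary lemmas -/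

lemma mem_addU {p q : βN} {A : Set ℕ} :
    A ∈ addU p q ↔ {n | {m | m + n ∈ A} ∈ p} ∈ q := Iff.rfl

lemma mem_filterStar {F : Filter ℕ} {p : βN} : p ∈ filterStar F ↔ ∀ A ∈ F, A ∈ p := by
  simp [filterStar]

lemma le_of_filterStar_subset {F G : Filter ℕ} (h : filterStar F ⊆ filterStar G) : F ≤ G := by
  intro A hA
  rw [Filter.mem_iff_ultrafilter]
  intro p hp
  have hpF : p ∈ filterStar F := mem_filterStar.mpr fun B hB => hp hB
  exact mem_filterStar.mp (h hpF) A hA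

lemma thick_iff {A : Set ℕ} : Thick A ↔ ∀ k, ∃ m, ∀ n ≤ k, m + n ∈ A := by
  constructor
  · intro h k
    obtain ⟨m, hm⟩ := h k
    exact ⟨m, fun n hn => hm ⟨Nat.le_add_right _ _, by omega⟩⟩
  · intro h k
    obtain ⟨m, hm⟩ := h k
    refine ⟨m, fun x hx => ?_⟩
    obtain ⟨h1, h2⟩ := hx
    have := hm (x - m) (by omega)
    simpa [show m + (x - m) = x by omega] using this

lemma thick_of_forall_mem (p : βN) (A : Set ℕ) (h : ∀ n, {m | m + n ∈ A} ∈ p) : Thick A := by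
  rw [thick_iff]
  intro k
  have hmem : {m | ∀ n ≤ k, m + n ∈ A} ∈ p := by
    have heq : {m | ∀ n ≤ k, m + n ∈ A} = ⋂ n ∈ Finset.range (k+1), {m | m + n ∈ A} := by
      ext m; simp [Nat.lt_succ_iff]
    rw [heq]
    exact (Filter.biInter_finset_mem _).mpr fun n _ => h n
  exact Ultrafilter.nonempty_of_mem hmem

lemma thick_mono {A B : Set ℕ} (h : Thick A) (hAB : A ⊆ B) : Thick B :=
  fun k => (h k).imp fun _ hm => hm.trans hAB

/-- the filter generated by the sets `⋂_{n ≤ N} (A - n)`, `A ∈ F`. -/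
def thickify (F : Filter ℕ) : Filter ℕ where
  sets := {B | ∃ A ∈ F, ∃ N, {m | ∀ n ≤ N, m + n ∈ A} ⊆ B}
  univ_sets := ⟨Set.univ, Filter.univ_mem, 0, fun _ _ => trivial⟩
  sets_of_superset := by
    rintro B C ⟨A, hA, N, h⟩ hBC
    exact ⟨A, hA, N, h.trans hBC⟩
  inter_sets := by
    rintro B C ⟨A, hA, N, h⟩ ⟨A', hA', N', h'⟩
    refine ⟨A ∩ A', Filter.inter_mem hA hA', max N N', fun m hm => ?_⟩
    exact ⟨h (fun n hn => (hm n (hn.trans (le_max_left _ _))).1),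
           h' (fun n hn => (hm n (hn.trans (le_max_right _ _))).2)⟩

lemma mem_thickify {F : Filter ℕ} {B : Set ℕ} :
    B ∈ thickify F ↔ ∃ A ∈ F, ∃ N, {m | ∀ n ≤ N, m + n ∈ A} ⊆ B := Iff.rfl

lemma thickify_le (F : Filter ℕ) : thickify F ≤ F := by
  intro A hA
  exact ⟨A, hA, 0, fun m hm => by simpa using hm 0 le_rfl⟩

lemma thick_base {A : Set ℕ} (hA : Thick A) (N : ℕ) : Thick {m | ∀ n ≤ N, m + n ∈ A} := by
  rw [thick_iff] at hA ⊢
  intro k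
  obtain ⟨m, hm⟩ := hA (k + N)
  refine ⟨m, fun n hn j hj => ?_⟩
  have := hm (n + j) (by omega)
  simpa [add_assoc] using this

lemma thickify_thick {F : Filter ℕ} (hF : ∀ A ∈ F, Thick A) :
    ∀ B ∈ thickify F, Thick B := by
  rintro B ⟨A, hA, N, h⟩
  exact thick_mono (thick_base (hF A hA) N) h

lemma thickify_neBot {F : Filter ℕ} (hF : ∀ A ∈ F, Thick A) : (thickify F).NeBot := by
  rw [← Filter.forall_mem_nonempty_iff_neBot]
  intro B hB
  exact (thickify_thick hF B hB 0).imp fun m hm => hm ⟨le_rfl, Nat.le_add_right _ _⟩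

lemma thickify_shiftInv {F : Filter ℕ} :
    ∀ B ∈ thickify F, ∀ j, {m | m + j ∈ B} ∈ thickify F := by
  rintro B ⟨A, hA, N, h⟩ j
  refine ⟨A, hA, N + j, fun m hm => ?_⟩
  refine h fun n hn => ?_
  have := hm (j + n) (by omega)
  simpa [add_assoc] using this

lemma isRightIdeal_of_shiftInv {H : Filter ℕ}
    (h : ∀ A ∈ H, ∀ n, {m | m + n ∈ A} ∈ H) : IsRightIdeal (filterStar H) := by
  intro p hp q
  rw [mem_filterStar] at hp ⊢
  intro A hA
  rw [mem_addU]
  have huniv : {n | {m | m + n ∈ A} ∈ p} = Set.univ :=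
    Set.eq_univ_of_forall fun n => hp _ (h A hA n)
  rw [huniv]
  exact Filter.univ_mem

/-- the filter of sets all of whose shifts are in `p`. -/
def invFil (p : βN) : Filter ℕ where
  sets := {A | ∀ n, {m | m + n ∈ A} ∈ p}
  univ_sets := fun n => by
    have : {m : ℕ | m + n ∈ Set.univ} = Set.univ := by simp
    rw [this]; exact Filter.univ_mem
  sets_of_superset := fun hA hAB n =>
    Filter.mem_of_superset (hA n) fun m hm => hAB hm
  inter_sets := fun hA hB n => by
    have := Filter.inter_mem (hA n) (hB n)
    exact this

lemma mem_invFil {p : βN} {A : Set ℕ} :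
    A ∈ invFil p ↔ ∀ n, {m | m + n ∈ A} ∈ p := Iff.rfl

/-- the filter on indices witnessing `r ∈ p + βℕ`. -/
def qFil (p r : βN) : Filter ℕ where
  sets := {B | ∃ A ∈ r, {n | {m | m + n ∈ A} ∈ p} ⊆ B}
  univ_sets := ⟨Set.univ, Filter.univ_mem, Set.subset_univ _⟩
  sets_of_superset := by
    rintro B C ⟨A, hA, h⟩ hBC
    exact ⟨A, hA, h.trans hBC⟩
  inter_sets := by
    rintro B C ⟨A, hA, h⟩ ⟨A', hA', h'⟩
    refine ⟨A ∩ A', Filter.inter_mem hA hA', fun n hn => ?_⟩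
    have h1 : {m | m + n ∈ A ∩ A'} ⊆ {m | m + n ∈ A} := fun m hm => hm.1
    have h2 : {m | m + n ∈ A ∩ A'} ⊆ {m | m + n ∈ A'} := fun m hm => hm.2
    exact ⟨h (Filter.mem_of_superset hn h1), h' (Filter.mem_of_superset hn h2)⟩

/-- For a free filter `F` on `ℕ`, `F*` is a minimal right ideal of
`(βℕ, +)` iff `F` is a `Θ`-ultrafilter: every member of `F` is thick and `F` is
maximal among free filters all of whose members are thick. -/
theorem stmt1 (F : Filter ℕ) (hF : F.NeBot) (hfree : F ≤ Filter.cofinite) :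
    IsMinRightIdeal (filterStar F) ↔
      ((∀ A ∈ F, Thick A) ∧
        ∀ G : Filter ℕ, G.NeBot → G ≤ Filter.cofinite → (∀ A ∈ G, Thick A) →
          G ≤ F → G = F) := by
  constructor
  · rintro ⟨hne, hRI, hmin⟩
    obtain ⟨p, hp⟩ := hne
    have hpF : ∀ A ∈ F, A ∈ p := mem_filterStar.mp hp
    constructor
    · -- every member of F is thick
      intro A hA
      refine thick_of_forall_mem p A fun n => ?_
      have h1 : addU p (pure n) ∈ filterStar F := hRI p hp (pure n)
      have h2 : A ∈ addU p (pure n) := mem_filterStar.mp h1 A hA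
      rw [mem_addU, Ultrafilter.mem_pure] at h2
      exact h2
    · -- maximality
      intro G hG hGfree hGthick hGF
      haveI : (thickify G).NeBot := thickify_neBot hGthick
      have hJne : (filterStar (thickify G)).Nonempty := by
        obtain ⟨q, hq⟩ := Ultrafilter.exists_le (thickify G)
        exact ⟨q, mem_filterStar.mpr fun B hB => hq hB⟩
      have hJRI : IsRightIdeal (filterStar (thickify G)) :=
        isRightIdeal_of_shiftInv thickify_shiftInv
      have hJsub : filterStar (thickify G) ⊆ filterStar F := by
        intro q hq
        rw [mem_filterStar] at hq ⊢
        intro A hA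
        exact hq A (thickify_le G (hGF hA))
      have hJeq : filterStar (thickify G) = filterStar F := hmin _ hJne hJRI hJsub
      have h1 : F ≤ thickify G := le_of_filterStar_subset hJeq.ge
      have h2 : thickify G ≤ F := le_of_filterStar_subset hJeq.le
      exact le_antisymm hGF (h1.trans (thickify_le G))
  · rintro ⟨hthick, hmax⟩
    -- F is shift-invariant
    haveI hTN : (thickify F).NeBot := thickify_neBot hthick
    have hTeq : thickify F = F :=
      hmax _ hTN ((thickify_le F).trans hfree) (thickify_thick hthick) (thickify_le F)
    have hshift : ∀ A ∈ F, ∀ n, {m | m + n ∈ A} ∈ F := by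
      intro A hA n
      rw [← hTeq]
      exact ⟨A, hA, n, fun m hm => hm n le_rfl⟩
    refine ⟨?_, isRightIdeal_of_shiftInv hshift, ?_⟩
    · obtain ⟨p, hp⟩ := Ultrafilter.exists_le F
      exact ⟨p, mem_filterStar.mpr fun A hA => hp hA⟩
    · intro J hJne hJRI hJsub
      obtain ⟨p, hpJ⟩ := hJne
      have hpF : ∀ A ∈ F, A ∈ p := mem_filterStar.mp (hJsub hpJ)
      -- invFil p = F
      have hIle : invFil p ≤ F := fun A hA n => hpF _ (hshift A hA n)
      have hINe : (invFil p).NeBot := by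
        rw [← Filter.forall_mem_nonempty_iff_neBot]
        intro A hA
        have h0 := hA 0
        have hne := Ultrafilter.nonempty_of_mem h0
        simpa using hne
      have hIfree : invFil p ≤ Filter.cofinite := by
        intro A hA n
        have hAn : {m | m + n ∈ A} ∈ Filter.cofinite := by
          rw [Filter.mem_cofinite] at hA ⊢
          have : {m | m + n ∈ A}ᶜ = (· + n) ⁻¹' Aᶜ := rfl
          rw [this]
          exact Set.Finite.preimage ((add_left_injective n).injOn) hA
        exact hpF _ (hfree hAn)
      have hIthick : ∀ A ∈ invFil p, Thick A := fun A hA => thick_of_forall_mem p A hA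
      have hIeq : invFil p = F := hmax _ hINe hIfree hIthick hIle
      refine Set.Subset.antisymm hJsub ?_
      intro r hr
      have hrF : ∀ A ∈ F, A ∈ r := mem_filterStar.mp hr
      haveI hqNe : (qFil p r).NeBot := by
        rw [← Filter.forall_mem_nonempty_iff_neBot]
        rintro B ⟨A, hA, h⟩
        refine Set.Nonempty.mono h ?_
        by_contra h0
        rw [Set.not_nonempty_iff_eq_empty, Set.eq_empty_iff_forall_notMem] at h0
        have hc : ∀ n, {m | m + n ∈ Aᶜ} ∈ p := by
          intro n
          have h1 : {m | m + n ∈ A}ᶜ ∈ p :=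
            Ultrafilter.compl_mem_iff_notMem.mpr (h0 n)
          have h2 : {m | m + n ∈ A}ᶜ = {m | m + n ∈ Aᶜ} := rfl
          rwa [h2] at h1
        have hAc : Aᶜ ∈ F := by rw [← hIeq]; exact hc
        exact (Ultrafilter.compl_mem_iff_notMem.mp (hrF _ hAc)) hA
      obtain ⟨q, hq⟩ := Ultrafilter.exists_le (qFil p r)
      have hle : (addU p q : Filter ℕ) ≤ (r : Filter ℕ) := by
        intro A hA
        exact hq (⟨A, hA, Set.Subset.rfl⟩ : {n | {m | m + n ∈ A} ∈ p} ∈ qFil p r)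
      have heq : addU p q = r := Ultrafilter.coe_le_coe.mp hle
      rw [← heq]
      exact hJRI p hpJ q


end
end

section
/- 𝔱_Θ ≤ 𝔱: every ⊆*-chain of infinite subsets of ℕ of cardinality strictly less than 𝔱_Θ has an infinite pseudo-intersection; equivalently, the least cardinality of a ⊆*-chain of thick sets with no thick ⊆*-lower bound is at most the least cardinality of a ⊆*-chain of infinite sets with no infinite pseudo-intersection. -/
open Filter Set Topology

noncomputable section

/-- Block `[n², n²+2n]`; these blocks partition `ℕ`. -/
def blk (n : ℕ) : Set ℕ := Set.Icc (n * n) (n * n + 2 * n)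

/-- Thickening of a set: union of the blocks indexed by it. -/
def TT (A : Set ℕ) : Set ℕ := ⋃ n ∈ A, blk n

lemma sqrt_mem_blk (m : ℕ) : m ∈ blk (Nat.sqrt m) := by
  have h1 : Nat.sqrt m * Nat.sqrt m ≤ m := by
    have := Nat.sqrt_le' m; rwa [pow_two] at this
  have h2 : m < (Nat.sqrt m + 1) * (Nat.sqrt m + 1) := by
    have := Nat.lt_succ_sqrt' m; rwa [Nat.succ_eq_add_one, pow_two] at this
  simp only [blk, Set.mem_Icc]
  constructor <;> nlinarith

lemma blk_sqrt_eq {m n : ℕ} (h : m ∈ blk n) : Nat.sqrt m = n := by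
  simp only [blk, Set.mem_Icc] at h
  have h1 : n ≤ Nat.sqrt m := Nat.le_sqrt'.mpr (by rw [pow_two]; exact h.1)
  have h2 : Nat.sqrt m < n + 1 := Nat.sqrt_lt'.mpr (by rw [pow_two]; nlinarith)
  omega

lemma TT_thick {A : Set ℕ} (hA : A.Infinite) : Thick (TT A) := by
  intro k
  obtain ⟨n, hnA, hkn⟩ : ∃ n ∈ A, k < n := by
    obtain ⟨n, hn⟩ := (hA.diff (Set.finite_Iic k)).nonempty
    exact ⟨n, hn.1, by simpa using hn.2⟩
  refine ⟨n * n, fun m hm => Set.mem_biUnion hnA ?_⟩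
  simp only [blk, Set.mem_Icc] at *
  omega

lemma TT_almostSub {A B : Set ℕ} (h : almostSub A B) : almostSub (TT A) (TT B) := by
  have hsub : TT A \ TT B ⊆ ⋃ n ∈ A \ B, blk n := by
    rintro m ⟨hmA, hmB⟩
    simp only [TT, Set.mem_iUnion, exists_prop] at hmA ⊢
    obtain ⟨n, hnA, hmn⟩ := hmA
    refine ⟨n, ⟨hnA, fun hnB => hmB ?_⟩, hmn⟩
    exact Set.mem_biUnion hnB hmn
  exact Set.Finite.subset (Set.Finite.biUnion h fun n _ => Set.finite_Icc _ _) hsub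

lemma TT_bound {C : Set (Set ℕ)} {B : Set ℕ} (hB : Thick B)
    (h : ∀ A ∈ C, almostSub B (TT A)) :
    ∃ B' : Set ℕ, B'.Infinite ∧ ∀ A ∈ C, almostSub B' A := by
  refine ⟨Nat.sqrt '' B, ?_, ?_⟩
  · intro hfin
    obtain ⟨b, hb⟩ := hfin.bddAbove
    obtain ⟨a, ha⟩ := hB ((b + 1) * (b + 1))
    have hmB : a + (b + 1) * (b + 1) ∈ B := ha (by simp [Set.mem_Icc])
    have : b + 1 ≤ Nat.sqrt (a + (b + 1) * (b + 1)) := Nat.le_sqrt'.mpr (by rw [pow_two]; nlinarith)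
    have := hb ⟨_, hmB, rfl⟩
    omega
  · intro A hA
    have hsub : Nat.sqrt '' B \ A ⊆ Nat.sqrt '' (B \ TT A) := by
      rintro n ⟨⟨m, hmB, rfl⟩, hnA⟩
      refine ⟨m, ⟨hmB, fun hmT => hnA ?_⟩, rfl⟩
      simp only [TT, Set.mem_iUnion, exists_prop] at hmT
      obtain ⟨n', hn'A, hmn'⟩ := hmT
      rwa [blk_sqrt_eq hmn']
    exact (((h A hA).image _).subset hsub)

lemma theta_le_of_witness {C : Set (Set ℕ)} (hinf : ∀ A ∈ C, A.Infinite)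
    (hchain : IsChain almostSub C)
    (hnb : ¬∃ B : Set ℕ, B.Infinite ∧ ∀ A ∈ C, almostSub B A) :
    towerNumTheta ≤ Cardinal.mk ↥C := by
  have hmem : Cardinal.mk ↥(TT '' C) ∈ {c : Cardinal | ∃ C : Set (Set ℕ),
      c = Cardinal.mk ↥C ∧ (∀ A ∈ C, Thick A) ∧ IsChain almostSub C ∧
      ¬∃ B : Set ℕ, Thick B ∧ ∀ A ∈ C, almostSub B A} := by
    refine ⟨TT '' C, rfl, ?_, ?_, ?_⟩
    · rintro _ ⟨A, hA, rfl⟩; exact TT_thick (hinf A hA)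
    · rintro _ ⟨A, hA, rfl⟩ _ ⟨A', hA', rfl⟩ hne
      have hAA' : A ≠ A' := by rintro rfl; exact hne rfl
      rcases hchain hA hA' hAA' with h | h
      · exact Or.inl (TT_almostSub h)
      · exact Or.inr (TT_almostSub h)
    · rintro ⟨B, hBthick, hBsub⟩
      exact hnb (TT_bound hBthick fun A hA => hBsub (TT A) ⟨A, hA, rfl⟩)
  exact le_trans (csInf_le' hmem) Cardinal.mk_image_le

lemma exists_tower : ∃ C : Set (Set ℕ), (∀ A ∈ C, A.Infinite) ∧ IsChain almostSub C ∧
    ¬∃ B : Set ℕ, B.Infinite ∧ ∀ A ∈ C, almostSub B A := by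
  obtain ⟨M, hM, -⟩ := IsChain.exists_maxChain
    (r := fun a b : {A : Set ℕ // A.Infinite} => almostSub a.1 b.1) (c := ∅)
    (Set.pairwise_empty _)
  obtain ⟨hMchain, hMmax⟩ := hM
  refine ⟨Subtype.val '' M, ?_, ?_, ?_⟩
  · rintro _ ⟨a, -, rfl⟩; exact a.2
  · rintro _ ⟨a, ha, rfl⟩ _ ⟨b, hb, rfl⟩ hne
    exact hMchain ha hb (fun hab => hne (by rw [hab]))
  · rintro ⟨B, hBinf, hBsub⟩
    set e := Set.Infinite.natEmbedding B hBinf with he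
    set g : ℕ → ℕ := fun n => (e n : ℕ) with hg
    have ginj : Function.Injective g := fun a b hab => e.injective (Subtype.ext hab)
    have gmem : ∀ n, g n ∈ B := fun n => (e n).2
    set B1 := Set.range (fun n => g (2 * n)) with hB1
    set B2 := Set.range (fun n => g (2 * n + 1)) with hB2
    have hB1inf : B1.Infinite :=
      Set.infinite_range_of_injective (fun a b hab => by
        have := ginj hab; omega)
    have hB2inf : B2.Infinite :=
      Set.infinite_range_of_injective (fun a b hab => by
        have := ginj hab; omega)
    have hB1sub : B1 ⊆ B := by rintro _ ⟨n, rfl⟩; exact gmem _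
    have hB2sub : B2 ⊆ B := by rintro _ ⟨n, rfl⟩; exact gmem _
    have memM : ∀ (X : Set ℕ) (hX : X.Infinite), X ⊆ B →
        (⟨X, hX⟩ : {A : Set ℕ // A.Infinite}) ∈ M := by
      intro X hX hXB
      have hchain' : IsChain (fun a b : {A : Set ℕ // A.Infinite} => almostSub a.1 b.1)
          (insert ⟨X, hX⟩ M) := by
        refine hMchain.insert fun b hb _ => Or.inl ?_
        exact ((hBsub b.1 ⟨b, hb, rfl⟩).subset (Set.diff_subset_diff_left hXB))
      have := hMmax hchain' (Set.subset_insert _ _)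
      rw [this]; exact Set.mem_insert _ _
    have h1 := memM B1 hB1inf hB1sub
    have h2 := memM B2 hB2inf hB2sub
    have hdisj : B1 ∩ B2 = ∅ := by
      ext m
      simp only [hB1, hB2, Set.mem_inter_iff, Set.mem_range, Set.mem_empty_iff_false,
        iff_false, not_and]
      rintro ⟨a, rfl⟩ ⟨b, hb⟩
      have := ginj hb; omega
    have hne : (⟨B1, hB1inf⟩ : {A : Set ℕ // A.Infinite}) ≠ ⟨B2, hB2inf⟩ := by
      intro hEq
      have : B1 = B2 := congrArg Subtype.val hEq
      have h0 : g 0 ∈ B1 := ⟨0, by simp⟩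
      rw [this] at h0
      have : g 0 ∈ B1 ∩ B2 := ⟨by rwa [this], h0⟩
      simp [hdisj] at this
    rcases hMchain h1 h2 hne with h | h
    · have : B1 \ B2 = B1 := by
        ext m
        refine ⟨fun hm => hm.1, fun hm => ⟨hm, fun h2 => ?_⟩⟩
        have : m ∈ B1 ∩ B2 := ⟨hm, h2⟩
        simp [hdisj] at this
      rw [almostSub, this] at h
      exact hB1inf h
    · have : B2 \ B1 = B2 := by
        ext m
        refine ⟨fun hm => hm.1, fun hm => ⟨hm, fun h2 => ?_⟩⟩
        have : m ∈ B1 ∩ B2 := ⟨h2, hm⟩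
        simp [hdisj] at this
      rw [almostSub, this] at h
      exact hB2inf h

/-- `𝔱_Θ ≤ 𝔱`: every `⊆*`-chain of infinite subsets of `ℕ` of
cardinality strictly less than `𝔱_Θ` has an infinite pseudo-intersection. -/
theorem stmt2 : towerNumTheta ≤ towerNum ∧
    ∀ C : Set (Set ℕ), (∀ A ∈ C, A.Infinite) → IsChain almostSub C →
      Cardinal.mk ↥C < towerNumTheta →
      ∃ B : Set ℕ, B.Infinite ∧ ∀ A ∈ C, almostSub B A := by
  constructor
  · obtain ⟨C, hinf, hchain, hnb⟩ := exists_tower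
    refine le_csInf ⟨Cardinal.mk ↥C, C, rfl, hinf, hchain, hnb⟩ ?_
    rintro c ⟨C', rfl, hinf', hchain', hnb'⟩
    exact theta_le_of_witness hinf' hchain' hnb'
  · intro C hinf hchain hlt
    by_contra hnb
    exact absurd (theta_le_of_witness hinf hchain hnb) (not_le.mpr hlt)

end
end

section
/- 𝔭 ≤ 𝔱_Θ: every ⊆*-chain of thick subsets of ℕ of cardinality strictly less than 𝔭 has a thick ⊆*-lower bound. -/
open Filter Set Topology

noncomputable section

lemma thick_large {A : Set ℕ} (hA : Thick A) (k N : ℕ) :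
    ∃ n, N ≤ n ∧ Set.Icc n (n + k) ⊆ A := by
  obtain ⟨n, hn⟩ := hA (k + N)
  exact ⟨n + N, Nat.le_add_left _ _, fun i hi => hn (by simp only [Set.mem_Icc] at hi ⊢; omega)⟩

lemma thick_shrink {B : Set ℕ} (hB : Thick B) :
    ∃ B', B' ⊆ B ∧ Thick B' ∧ (B \ B').Infinite := by
  choose g hg1 hg2 using fun k N => thick_large hB k N
  let f : ℕ → ℕ := fun k => Nat.rec (g 1 0) (fun k ih => g (k + 2) (ih + k + 2)) k
  have hf1 : ∀ k, Set.Icc (f k) (f k + (k + 1)) ⊆ B := by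
    intro k
    cases k with
    | zero => exact hg2 1 0
    | succ k => exact hg2 (k + 2) (f k + k + 2)
  have hf2 : ∀ k, f k + k + 2 ≤ f (k + 1) := fun k => hg1 (k + 2) (f k + k + 2)
  have hmono : StrictMono f := strictMono_nat_of_lt_succ (fun k => by have := hf2 k; omega)
  have hgap : ∀ j k, j < k → f j + j + 2 ≤ f k := by
    intro j k hjk
    calc f j + j + 2 ≤ f (j + 1) := hf2 j
    _ ≤ f k := hmono.monotone hjk
  refine ⟨B \ Set.range f, diff_subset, ?_, ?_⟩
  · intro k
    refine ⟨f k + 1, fun i hi => ⟨hf1 k (by simp only [Set.mem_Icc] at hi ⊢; omega), ?_⟩⟩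
    rintro ⟨j, rfl⟩
    simp only [Set.mem_Icc] at hi
    rcases lt_trichotomy j k with h | rfl | h
    · have := hgap j k h; omega
    · omega
    · have := hgap k j h; omega
  · have : Set.range f ⊆ B \ (B \ Set.range f) := by
      rintro _ ⟨k, rfl⟩
      have hb : f k ∈ B := hf1 k ⟨le_refl _, by omega⟩
      exact ⟨hb, fun h => h.2 ⟨k, rfl⟩⟩
    exact ((Set.infinite_range_of_injective hmono.injective).mono this)

lemma countable_fip {C : Set (Set ℕ)} (hC : C.Countable)
    (hfip : ∀ S : Finset (Set ℕ), ↑S ⊆ C → (⋂ A ∈ S, A : Set ℕ).Infinite) :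
    ∃ B : Set ℕ, B.Infinite ∧ ∀ A ∈ C, almostSub B A := by
  classical
  rcases C.eq_empty_or_nonempty with h | h
  · exact ⟨Set.univ, Set.infinite_univ, by simp [h]⟩
  obtain ⟨f, hf⟩ := Set.Countable.exists_eq_range hC h
  have hg : ∀ k, (⋂ i ∈ Finset.range (k + 1), f i : Set ℕ).Infinite := by
    intro k
    have h1 : ((Finset.range (k + 1)).image f : Set (Set ℕ)) ⊆ C := by
      intro A hA
      simp only [Finset.coe_image, Set.mem_image, Finset.mem_coe, Finset.mem_image,
        Finset.mem_range] at hA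
      obtain ⟨i, _, rfl⟩ := hA
      rw [hf]; exact ⟨i, rfl⟩
    have h2 := hfip _ h1
    have h3 : (⋂ A ∈ (Finset.range (k + 1)).image f, A : Set ℕ)
        = ⋂ i ∈ Finset.range (k + 1), f i := by
      ext x; simp
    rwa [h3] at h2
  let b : ℕ → ℕ := fun k => Nat.rec ((hg 0).nonempty.choose)
    (fun k ih => ((hg (k + 1)).exists_gt ih).choose) k
  have hb1 : ∀ k, b k ∈ ⋂ i ∈ Finset.range (k + 1), f i := by
    intro k
    cases k with
    | zero => exact (hg 0).nonempty.choose_spec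
    | succ k => exact ((hg (k + 1)).exists_gt (b k)).choose_spec.1
  have hb2 : StrictMono b :=
    strictMono_nat_of_lt_succ fun k => ((hg (k + 1)).exists_gt (b k)).choose_spec.2
  have hbmem : ∀ i k, i ≤ k → b k ∈ f i := by
    intro i k hik
    have := hb1 k
    simp only [Set.mem_iInter, Finset.mem_range] at this
    exact this i (by omega)
  refine ⟨Set.range b, Set.infinite_range_of_injective hb2.injective, ?_⟩
  intro A hA
  rw [hf] at hA
  obtain ⟨i, rfl⟩ := hA
  have : Set.range b \ f i ⊆ b '' Set.Iio i := by
    rintro x ⟨⟨k, rfl⟩, hk⟩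
    refine ⟨k, ?_, rfl⟩; by_contra h; exact hk (hbmem i k (by simp [Set.mem_Iio] at h; omega))
  exact ((Set.finite_Iio i).image b).subset this

def Sop (A : Set ℕ) : Set ℕ :=
  {m | Set.Icc (Nat.unpair m).1 ((Nat.unpair m).1 + (Nat.unpair m).2) ⊆ A}

def Kop (j : ℕ) : Set ℕ := {m | j ≤ (Nat.unpair m).2}

lemma fip_claim {C : Set (Set ℕ)} (hthick : ∀ A ∈ C, Thick A)
    (hchain : IsChain almostSub C) (S : Finset (Set ℕ)) :
    ↑S ⊆ Sop '' C ∪ Set.range Kop →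
    ∃ A₀ N J, Thick A₀ ∧ ∀ x ∈ S, ∀ n k, N ≤ n → J ≤ k →
      Set.Icc n (n + k) ⊆ A₀ → Nat.pair n k ∈ x := by
  classical
  -- strengthen: A₀ is univ or in C
  suffices h : ↑S ⊆ Sop '' C ∪ Set.range Kop →
      ∃ A₀ N J, Thick A₀ ∧ (A₀ = Set.univ ∨ A₀ ∈ C) ∧ ∀ x ∈ S, ∀ n k, N ≤ n → J ≤ k →
        Set.Icc n (n + k) ⊆ A₀ → Nat.pair n k ∈ x by
    intro hS; obtain ⟨A₀, N, J, h1, _, h3⟩ := h hS; exact ⟨A₀, N, J, h1, h3⟩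
  induction S using Finset.induction_on with
  | empty =>
    exact fun _ => ⟨Set.univ, 0, 0, fun k => ⟨0, Set.subset_univ _⟩, Or.inl rfl, by simp⟩
  | @insert x S hx ih =>
    intro hS
    have hxC : x ∈ Sop '' C ∪ Set.range Kop := hS (by simp)
    obtain ⟨A₀, N, J, hA₀, hA₀C, hall⟩ :=
      ih ((Finset.coe_subset.mpr (Finset.subset_insert x S)).trans hS)
    rcases hxC with ⟨A, hAC, rfl⟩ | ⟨j, rfl⟩
    · -- x = Sop A
      have hSopA : ∀ n k, Set.Icc n (n + k) ⊆ A → Nat.pair n k ∈ Sop A := by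
        intro n k h; simp only [Sop, Set.mem_setOf_eq, Nat.unpair_pair]; exact h
      have key : ∀ A₀', Thick A₀' → (A₀' = Set.univ ∨ A₀' ∈ C) → almostSub A₀' A₀ →
          almostSub A₀' A →
          ∃ B N' J', Thick B ∧ (B = Set.univ ∨ B ∈ C) ∧ ∀ y ∈ insert (Sop A) S,
            ∀ n k, N' ≤ n → J' ≤ k → Set.Icc n (n + k) ⊆ B → Nat.pair n k ∈ y := by
        intro A₀' hT hC' hsub hsubA
        obtain ⟨M, hM⟩ := (hsub.union hsubA).bddAbove
        refine ⟨A₀', max N (M + 1), J, hT, hC', ?_⟩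
        intro y hy n k hn hk hIcc
        have hIA : Set.Icc n (n + k) ⊆ A := by
          intro i hi
          have hiA0 : i ∈ A₀' := hIcc hi
          by_contra hiA
          have : i ∈ (A₀' \ A₀) ∪ (A₀' \ A) := Or.inr ⟨hiA0, hiA⟩
          have := hM this
          simp only [Set.mem_Icc] at hi; omega
        rcases Finset.mem_insert.mp hy with rfl | hyS
        · exact hSopA n k hIA
        · refine hall y hyS n k (le_trans (le_max_left _ _) hn) hk ?_
          intro i hi
          have hiA0 : i ∈ A₀' := hIcc hi
          by_contra hiA
          have : i ∈ (A₀' \ A₀) ∪ (A₀' \ A) := Or.inl ⟨hiA0, hiA⟩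
          have := hM this
          simp only [Set.mem_Icc] at hi; omega
      rcases hA₀C with rfl | hA₀C
      · exact key A (hthick A hAC) (Or.inr hAC) (by simp [almostSub])
          (by simp [almostSub, Set.diff_self])
      · rcases eq_or_ne A A₀ with rfl | hne
        · exact key A (hthick A hAC) (Or.inr hAC) (by simp [almostSub, Set.diff_self])
            (by simp [almostSub, Set.diff_self])
        · rcases hchain hAC hA₀C hne with h | h
          · exact key A (hthick A hAC) (Or.inr hAC) h (by simp [almostSub, Set.diff_self])
          · exact key A₀ hA₀ (Or.inr hA₀C) (by simp [almostSub, Set.diff_self]) h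
    · -- x = Kop j
      refine ⟨A₀, N, max J j, hA₀, hA₀C, ?_⟩
      intro y hy n k hn hk hIcc
      rcases Finset.mem_insert.mp hy with rfl | hyS
      · simp only [Kop, Set.mem_setOf_eq, Nat.unpair_pair]; omega
      · exact hall y hyS n k hn (le_trans (le_max_left _ _) hk) hIcc

lemma theta_witness : ∃ C : Set (Set ℕ), (∀ A ∈ C, Thick A) ∧ IsChain almostSub C ∧
    ¬∃ B : Set ℕ, Thick B ∧ ∀ A ∈ C, almostSub B A := by
  have huniv : Thick Set.univ := fun k => ⟨0, Set.subset_univ _⟩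
  obtain ⟨M, hM, hMsub⟩ := (IsChain.singleton (r := fun x y : {A : Set ℕ // Thick A} =>
    almostSub x.1 y.1) (a := ⟨Set.univ, huniv⟩)).exists_maxChain
  refine ⟨Subtype.val '' M, ?_, ?_, ?_⟩
  · rintro A ⟨⟨A, hA⟩, _, rfl⟩; exact hA
  · rintro _ ⟨x, hx, rfl⟩ _ ⟨y, hy, rfl⟩ hne
    exact hM.1 hx hy (fun h => hne (by rw [h]))
  · rintro ⟨B, hB, hlow⟩
    obtain ⟨B', hB'sub, hB'thick, hB'inf⟩ := thick_shrink hB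
    have hins : IsChain (fun x y : {A : Set ℕ // Thick A} => almostSub x.1 y.1)
        (insert ⟨B', hB'thick⟩ M) := by
      refine hM.1.insert fun y hy _ => Or.inl ?_
      have := hlow y.1 ⟨y, hy, rfl⟩
      exact this.subset (Set.diff_subset_diff_left hB'sub)
    have heq : M = insert ⟨B', hB'thick⟩ M := hM.2 hins (Set.subset_insert _ _)
    have hmem : (⟨B', hB'thick⟩ : {A : Set ℕ // Thick A}) ∈ M := by
      rw [heq]; exact Set.mem_insert _ _
    have := hlow B' ⟨⟨B', hB'thick⟩, hmem, rfl⟩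
    exact hB'inf this

lemma thick_univ'  : Thick Set.univ := fun k => ⟨0, Set.subset_univ _⟩

lemma pNum_set_aleph0 : ∀ c ∈ {c : Cardinal | ∃ C : Set (Set ℕ), c = Cardinal.mk ↥C ∧
    (∀ S : Finset (Set ℕ), ↑S ⊆ C → (⋂ A ∈ S, A : Set ℕ).Infinite) ∧
    ¬∃ B : Set ℕ, B.Infinite ∧ ∀ A ∈ C, almostSub B A}, Cardinal.aleph0 < c := by
  rintro c ⟨C, rfl, hfip, hno⟩
  by_contra h
  push_neg at h
  have hcount : C.Countable := by
    rw [← Set.countable_coe_iff, ← Cardinal.mk_le_aleph0_iff]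
    exact h
  exact hno (countable_fip hcount hfip)

lemma main_part2 : ∀ C : Set (Set ℕ), (∀ A ∈ C, Thick A) → IsChain almostSub C →
    Cardinal.mk ↥C < pNum →
    ∃ B : Set ℕ, Thick B ∧ ∀ A ∈ C, almostSub B A := by
  intro C hthick hchain hlt
  have hpne : {c : Cardinal | ∃ C : Set (Set ℕ), c = Cardinal.mk ↥C ∧
      (∀ S : Finset (Set ℕ), ↑S ⊆ C → (⋂ A ∈ S, A : Set ℕ).Infinite) ∧
      ¬∃ B : Set ℕ, B.Infinite ∧ ∀ A ∈ C, almostSub B A}.Nonempty := by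
    rw [Set.nonempty_iff_ne_empty]
    intro h
    rw [pNum, h, Cardinal.sInf_empty] at hlt
    exact (Cardinal.mk ↥C).zero_le.not_gt hlt
  have haleph : Cardinal.aleph0 < pNum := pNum_set_aleph0 _ (csInf_mem hpne)
  -- the auxiliary family
  set C' : Set (Set ℕ) := Sop '' C ∪ Set.range Kop with hC'
  have hcard : Cardinal.mk ↥C' < pNum := by
    calc Cardinal.mk ↥C' ≤ Cardinal.mk ↥(Sop '' C) + Cardinal.mk ↥(Set.range Kop) :=
          Cardinal.mk_union_le _ _
    _ ≤ Cardinal.mk ↥C + Cardinal.aleph0 := by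
        refine add_le_add (Cardinal.mk_image_le) ?_
        simpa using Cardinal.mk_range_le (f := Kop)
    _ < pNum := Cardinal.add_lt_of_lt haleph.le hlt haleph
  have hfip : ∀ S : Finset (Set ℕ), ↑S ⊆ C' → (⋂ A ∈ S, A : Set ℕ).Infinite := by
    intro S hS
    obtain ⟨A₀, N, J, hA₀, hall⟩ := fip_claim hthick hchain S hS
    have hU : {n | N ≤ n ∧ Set.Icc n (n + J) ⊆ A₀}.Infinite := by
      apply Set.infinite_of_not_bddAbove
      rintro ⟨M, hM⟩
      obtain ⟨n, hn1, hn2⟩ := thick_large hA₀ J (max N (M + 1))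
      have := hM (⟨le_trans (le_max_left _ _) hn1, hn2⟩ :
        n ∈ {n | N ≤ n ∧ Set.Icc n (n + J) ⊆ A₀})
      omega
    have himg : (fun n => Nat.pair n J) '' {n | N ≤ n ∧ Set.Icc n (n + J) ⊆ A₀}
        ⊆ ⋂ A ∈ S, A := by
      rintro _ ⟨n, ⟨hn1, hn2⟩, rfl⟩
      simp only [Set.mem_iInter]
      exact fun x hx => hall x hx n J hn1 (le_refl J) hn2
    exact (hU.image (fun a _ b _ h => by
      have := congrArg (fun m => (Nat.unpair m).1) h
      simpa [Nat.unpair_pair] using this)).mono himg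
  have hT : ∃ T : Set ℕ, T.Infinite ∧ ∀ A ∈ C', almostSub T A := by
    by_contra h
    have : pNum ≤ Cardinal.mk ↥C' := csInf_le (OrderBot.bddBelow _) ⟨C', rfl, hfip, h⟩
    exact this.not_gt hcard
  obtain ⟨T, hTinf, hTsub⟩ := hT
  refine ⟨{i | ∃ m ∈ T, i ∈ Set.Icc (Nat.unpair m).1 ((Nat.unpair m).1 + (Nat.unpair m).2)},
    ?_, ?_⟩
  · -- thick
    intro k
    obtain ⟨m, hmT, hm2⟩ := (hTinf.diff (hTsub _ (Or.inr ⟨k, rfl⟩))).nonempty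
    have hmK : m ∈ Kop k := by by_contra h; exact hm2 ⟨hmT, h⟩
    refine ⟨(Nat.unpair m).1, fun i hi => ⟨m, hmT, ?_⟩⟩
    simp only [Set.mem_Icc] at hi ⊢
    have : k ≤ (Nat.unpair m).2 := hmK
    omega
  · -- almost below every A ∈ C
    intro A hA
    have hSA : almostSub T (Sop A) := hTsub _ (Or.inl ⟨A, hA, rfl⟩)
    have hsub : {i | ∃ m ∈ T, i ∈ Set.Icc (Nat.unpair m).1 ((Nat.unpair m).1 +
        (Nat.unpair m).2)} \ A ⊆
        ⋃ m ∈ (T \ Sop A), Set.Icc (Nat.unpair m).1 ((Nat.unpair m).1 + (Nat.unpair m).2) := by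
      rintro i ⟨⟨m, hmT, hmi⟩, hiA⟩
      refine Set.mem_biUnion ⟨hmT, fun hmS => hiA (hmS hmi)⟩ hmi
    exact (Set.Finite.biUnion hSA (fun m _ => Set.finite_Icc _ _)).subset hsub

/-- `𝔭 ≤ 𝔱_Θ`: every `⊆*`-chain of thick subsets of `ℕ` of
cardinality strictly less than `𝔭` has a thick `⊆*`-lower bound. -/
theorem stmt3 : pNum ≤ towerNumTheta ∧
    ∀ C : Set (Set ℕ), (∀ A ∈ C, Thick A) → IsChain almostSub C →
      Cardinal.mk ↥C < pNum →
      ∃ B : Set ℕ, Thick B ∧ ∀ A ∈ C, almostSub B A := by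
  have part2 := main_part2
  constructor
  · obtain ⟨C, h1, h2, h3⟩ := theta_witness
    refine le_csInf ⟨Cardinal.mk ↥C, C, rfl, h1, h2, h3⟩ ?_
    rintro c ⟨C, rfl, hth, hch, hno⟩
    exact le_of_not_gt fun hlt => hno (part2 C hth hch hlt)
  · exact part2


end
end

section
/- If f : ℕ → ℕ is finite-to-one, then the continuous extension βf : βℕ → βℕ maps every closed P-set of ℕ* onto a closed P-set of ℕ*. -/
open Filter Set Topology

noncomputable section

lemma tendsto_cofinite_of_finiteToOne {f : ℕ → ℕ} (hf : ∀ n : ℕ, (f ⁻¹' {n}).Finite) :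
    Filter.Tendsto f Filter.cofinite Filter.cofinite := by
  intro s hs
  rw [Filter.mem_cofinite] at hs
  rw [Filter.mem_map, Filter.mem_cofinite]
  have h1 : (f ⁻¹' s)ᶜ = ⋃ n ∈ sᶜ, f ⁻¹' {n} := by
    ext a; simp [Set.mem_iUnion]
  rw [h1]
  exact hs.biUnion fun n _ => hf n

lemma map_mem_NStar {f : ℕ → ℕ} (hf : ∀ n : ℕ, (f ⁻¹' {n}).Finite) {p : βN}
    (hp : p ∈ NStar) : Ultrafilter.map f p ∈ NStar := by
  simp only [NStar, Set.mem_setOf_eq, Ultrafilter.coe_map] at *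
  exact (Filter.map_mono hp).trans (tendsto_cofinite_of_finiteToOne hf)

lemma continuous_ultrafilter_map (f : ℕ → ℕ) : Continuous (Ultrafilter.map f : βN → βN) := by
  rw [show (Ultrafilter.topologicalSpace :
        TopologicalSpace (Ultrafilter ℕ)) = TopologicalSpace.generateFrom (ultrafilterBasis ℕ)
      from rfl, continuous_generateFrom_iff]
  rintro _ ⟨s, rfl⟩
  have : (Ultrafilter.map f : βN → βN) ⁻¹' {u | s ∈ u} = {u : βN | f ⁻¹' s ∈ u} := by
    ext p; exact Ultrafilter.mem_map
  rw [this]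
  exact ultrafilter_isOpen_basic _

lemma isClosed_NStar : IsClosed NStar := by
  have : NStar = ⋂ s ∈ {s : Set ℕ | sᶜ.Finite}, {p : βN | s ∈ p} := by
    ext p
    simp only [NStar, Set.mem_setOf_eq, Set.mem_iInter]
    constructor
    · intro h s hs; exact h (Filter.mem_cofinite.2 hs)
    · intro h s hs; exact h s (Filter.mem_cofinite.1 hs)
  rw [this]
  exact isClosed_biInter fun s _ => ultrafilter_isClosed_basic s

lemma exists_preimage_ultrafilter {f : ℕ → ℕ} {A : Set ℕ} {q : βN}
    (hq : q ∈ NStar) (hA : f '' A ∈ q) :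
    ∃ p : βN, p ∈ NStar ∧ A ∈ p ∧ Ultrafilter.map f p = q := by
  set F : Filter ℕ := Filter.comap f ↑q ⊓ (Filter.principal A ⊓ Filter.cofinite) with hF
  have hne : F.NeBot := by
    rw [Filter.neBot_iff]
    intro hbot
    have : (∅ : Set ℕ) ∈ F := by rw [hbot]; exact Filter.mem_bot
    rw [hF, Filter.mem_inf_iff] at this
    obtain ⟨t, ht, u, hu, htu⟩ := this
    rw [Filter.mem_inf_iff] at hu
    obtain ⟨u₁, hu₁, u₂, hu₂, huu⟩ := hu
    rw [Filter.mem_comap] at ht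
    obtain ⟨B, hB, hBt⟩ := ht
    rw [Filter.mem_principal] at hu₁
    -- B ∩ f '' A is infinite
    have hCmem : B ∩ f '' A ∈ q := Filter.inter_mem hB hA
    have hCinf : (B ∩ f '' A).Infinite := by
      intro hfin
      have h2 : (B ∩ f '' A)ᶜ ∈ q := hq (Filter.mem_cofinite.2 (by simpa using hfin))
      have h3 : (B ∩ f '' A) ∩ (B ∩ f '' A)ᶜ ∈ q := Filter.inter_mem hCmem h2
      rw [Set.inter_compl_self] at h3
      exact Filter.empty_notMem (q : Filter ℕ) h3
    -- hence f ⁻¹' B ∩ A is infinite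
    have hsub : B ∩ f '' A ⊆ f '' (f ⁻¹' B ∩ A) := by
      rintro c ⟨hcB, a, haA, rfl⟩
      exact ⟨a, ⟨hcB, haA⟩, rfl⟩
    have hPinf : (f ⁻¹' B ∩ A).Infinite := by
      intro hfin
      exact hCinf (hfin.image f |>.subset hsub)
    have hnonempty : ((f ⁻¹' B ∩ A) ∩ u₂).Nonempty := by
      have := hPinf.diff (Filter.mem_cofinite.1 hu₂)
      obtain ⟨x, hx⟩ := this.nonempty
      exact ⟨x, hx.1, by_contra fun h => hx.2 h⟩
    obtain ⟨x, ⟨hxB, hxA⟩, hxu⟩ := hnonempty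
    have : x ∈ t ∩ u := ⟨hBt hxB, huu ▸ ⟨hu₁ hxA, hxu⟩⟩
    rw [← htu] at this
    exact this
  obtain ⟨p, hp⟩ := Ultrafilter.exists_le F
  refine ⟨p, ?_, ?_, ?_⟩
  · exact (hp.trans inf_le_right).trans inf_le_right
  · exact Filter.le_principal_iff.1 ((hp.trans inf_le_right).trans inf_le_left)
  · have h1 : (p : Filter ℕ) ≤ Filter.comap f ↑q := hp.trans inf_le_left
    have h2 : (Ultrafilter.map f p : Filter ℕ) ≤ (q : Filter ℕ) := by
      rw [Ultrafilter.coe_map]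
      exact Filter.map_le_iff_le_comap.2 h1
    exact Ultrafilter.coe_le_coe.1 h2

lemma mapStar_isOpenMap {f : ℕ → ℕ} (hf : ∀ n : ℕ, (f ⁻¹' {n}).Finite) :
    IsOpenMap (fun p : ↥NStar => (⟨Ultrafilter.map f p.1, map_mem_NStar hf p.2⟩ : ↥NStar)) := by
  set g : ↥NStar → ↥NStar :=
    fun p => ⟨Ultrafilter.map f p.1, map_mem_NStar hf p.2⟩ with hg
  intro V hV
  rw [isOpen_iff_forall_mem_open]
  rintro _ ⟨x, hxV, rfl⟩
  obtain ⟨O, hO, rfl⟩ := isOpen_induced_iff.1 hV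
  obtain ⟨v, ⟨A, rfl⟩, hxv, hvO⟩ :=
    ultrafilterBasis_is_basis.exists_subset_of_mem_open (hxV : x.1 ∈ O) hO
  refine ⟨Subtype.val ⁻¹' {u : βN | f '' A ∈ u}, ?_, ?_, ?_⟩
  · rintro ⟨q, hqN⟩ hq
    obtain ⟨p, hpN, hpA, hpq⟩ := exists_preimage_ultrafilter hqN hq
    exact ⟨⟨p, hpN⟩, hvO hpA, Subtype.ext hpq⟩
  · exact (ultrafilter_isOpen_basic _).preimage continuous_subtype_val
  · exact Ultrafilter.mem_map.2 (Filter.mem_of_superset hxv (Set.subset_preimage_image f A))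

/-- If `f : ℕ → ℕ` is finite-to-one then `βf` maps every closed
`P`-set of `ℕ*` onto a closed `P`-set of `ℕ*`. -/
theorem stmt6 (f : ℕ → ℕ) (hf : ∀ n : ℕ, (f ⁻¹' {n}).Finite)
    (X : Set βN) (hX : IsPSetIn X) :
    IsPSetIn (Ultrafilter.map f '' X) := by
  classical
  have hXN : X ⊆ NStar := hX.1
  have hsub : Ultrafilter.map f '' X ⊆ NStar := by
    rintro _ ⟨p, hp, rfl⟩; exact map_mem_NStar hf (hXN hp)
  set g : ↥NStar → ↥NStar :=
    fun p => ⟨Ultrafilter.map f p.1, map_mem_NStar hf p.2⟩ with hg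
  have hgc : Continuous g :=
    ((continuous_ultrafilter_map f).comp continuous_subtype_val).subtype_mk _
  have hgo : IsOpenMap g := mapStar_isOpenMap hf
  have himg : Subtype.val ⁻¹' (Ultrafilter.map f '' X) = g '' (Subtype.val ⁻¹' X) := by
    ext q
    constructor
    · rintro ⟨p, hp, hpq⟩
      exact ⟨⟨p, hXN hp⟩, hp, Subtype.ext hpq⟩
    · rintro ⟨⟨p, hpN⟩, hp, rfl⟩
      exact ⟨p, hp, rfl⟩
  have : CompactSpace ↥NStar := isCompact_iff_compactSpace.1 isClosed_NStar.isCompact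
  have hXc : IsClosed (Subtype.val ⁻¹' X) := hX.2.1
  have hYc : IsClosed ((Subtype.val : ↥NStar → βN) ⁻¹' (Ultrafilter.map f '' X)) := by
    rw [himg]
    exact (hXc.isCompact.image hgc).isClosed
  refine ⟨hsub, hYc, ?_⟩
  intro 𝒜 h𝒜c h𝒜
  set ℬ : Set (Set ↥NStar) := (fun U => g ⁻¹' U) '' 𝒜 with hℬ
  have hint : Subtype.val ⁻¹' X ⊆ interior (⋂₀ ℬ) := by
    refine hX.2.2 ℬ (h𝒜c.image _) ?_
    rintro _ ⟨U, hU, rfl⟩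
    refine ⟨(h𝒜 U hU).1.preimage hgc, ?_⟩
    intro x hx
    exact (h𝒜 U hU).2 (himg ▸ Set.mem_image_of_mem g hx)
  rw [himg]
  rintro _ ⟨x, hx, rfl⟩
  have hW : IsOpen (g '' interior (⋂₀ ℬ)) := hgo _ isOpen_interior
  have hWsub : g '' interior (⋂₀ ℬ) ⊆ ⋂₀ 𝒜 := by
    rintro _ ⟨w, hw, rfl⟩ U hU
    exact interior_subset hw (g ⁻¹' U) ⟨U, hU, rfl⟩
  exact interior_maximal hWsub hW ⟨x, hint hx, rfl⟩


end
end

section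
/- If some minimal right ideal of (βℕ, +) is a P-set in ℕ*, then there exists a P-point in ℕ*. -/
open Filter Set Topology

noncomputable section

namespace Stmt8

/-- `A − n`. -/
def dsub (A : Set ℕ) (n : ℕ) : Set ℕ := (· + n) ⁻¹' A

lemma mem_dsub {A : Set ℕ} {m n : ℕ} : m ∈ dsub A n ↔ m + n ∈ A := Iff.rfl

lemma dsub_dsub (A : Set ℕ) (m n : ℕ) : dsub (dsub A n) m = dsub A (m + n) := by
  ext j; simp [dsub, add_assoc]

lemma mem_addU {p q : βN} {A : Set ℕ} :
    A ∈ addU p q ↔ {n | dsub A n ∈ p} ∈ q := by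
  change A ∈ Filter.bind (q : Filter ℕ) (fun n => ((p.map (· + n) : βN) : Filter ℕ)) ↔ _
  rw [Filter.mem_bind']
  rfl

lemma addU_pure (p : βN) (n : ℕ) : addU p (pure n) = p.map (· + n) := by
  apply Ultrafilter.ext; intro s
  rw [mem_addU]
  simp only [Ultrafilter.mem_pure, Set.mem_setOf_eq, Ultrafilter.mem_map]
  rfl

lemma addU_assoc (p q r : βN) : addU (addU p q) r = addU p (addU q r) := by
  apply Ultrafilter.ext; intro A
  rw [mem_addU, mem_addU, mem_addU]
  have hset : {n | dsub A n ∈ addU p q} = {n | dsub {k | dsub A k ∈ p} n ∈ q} := by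
    ext n
    rw [Set.mem_setOf_eq, Set.mem_setOf_eq, mem_addU]
    have h2 : dsub {k | dsub A k ∈ p} n = {m | dsub (dsub A n) m ∈ p} := by
      ext m
      change dsub A (m + n) ∈ p ↔ dsub (dsub A n) m ∈ p
      rw [dsub_dsub]
    rw [h2]
  rw [hset]

lemma min_trans {R : Set βN} (hR : IsMinRightIdeal R) {q r : βN} (hq : q ∈ R) (hr : r ∈ R) :
    ∃ p : βN, addU q p = r := by
  have hJ : IsRightIdeal (Set.range (addU q)) := by
    rintro _ ⟨p, rfl⟩ p'
    exact ⟨addU p p', (addU_assoc q p p').symm⟩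
  have hsub : Set.range (addU q) ⊆ R := by
    rintro _ ⟨p, rfl⟩; exact hR.2.1 q hq p
  have hEq := hR.2.2 (Set.range (addU q)) ⟨addU q q, q, rfl⟩ hJ hsub
  rw [← hEq] at hr
  exact hr

/-- The filter of clopen neighborhoods of `R`. -/
def FF (R : Set βN) : Set (Set ℕ) := {A | ∀ p ∈ R, A ∈ p}

lemma dsub_mem {R : Set βN} (hR : IsMinRightIdeal R) {A : Set ℕ} (hA : A ∈ FF R)
    {r : βN} (hr : r ∈ R) (i : ℕ) : dsub A i ∈ r := by
  have h1 : addU r (pure i) ∈ R := hR.2.1 r hr (pure i)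
  have h2 := hA _ h1
  rw [addU_pure, Ultrafilter.mem_map] at h2
  exact h2

lemma FF_thick {R : Set βN} (hR : IsMinRightIdeal R) {A : Set ℕ} (hA : A ∈ FF R) : Thick A := by
  intro k
  obtain ⟨r, hr⟩ := hR.1
  have hmem : (⋂ i ∈ Finset.range (k + 1), dsub A i) ∈ r := by
    rw [← Ultrafilter.mem_coe, Filter.biInter_finset_mem]
    exact fun i _ => dsub_mem hR hA hr i
  obtain ⟨n, hn⟩ := Ultrafilter.nonempty_of_mem hmem
  refine ⟨n, fun m hm => ?_⟩
  simp only [Set.mem_Icc] at hm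
  simp only [Set.mem_iInter] at hn
  have h1 : m - n ∈ Finset.range (k + 1) := by
    simp only [Finset.mem_range]; omega
  have := hn (m - n) h1
  rw [mem_dsub] at this
  have hmn : n + (m - n) = m := by omega
  rwa [hmn] at this

lemma exists_free {S : Set ℕ} (hS : S.Infinite) : ∃ p : βN, p ∈ NStar ∧ S ∈ p := by
  have : (Filter.cofinite ⊓ Filter.principal S).NeBot := hS.cofinite_inf_principal_neBot
  obtain ⟨p, hp⟩ := Ultrafilter.exists_le (Filter.cofinite ⊓ 𝓟 S)
  refine ⟨p, le_trans hp inf_le_left, ?_⟩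
  exact le_trans hp inf_le_right (Filter.mem_principal_self S)

lemma isClosed_NStar : IsClosed NStar := by
  have h : NStar = ⋂ (s : Set ℕ) (_ : s ∈ Filter.cofinite), {p : βN | s ∈ p} := by
    ext p
    simp only [NStar, Set.mem_setOf_eq, Set.mem_iInter, Filter.le_def]
    rfl
  rw [h]
  exact isClosed_iInter fun s => isClosed_iInter fun _ => ultrafilter_isClosed_basic s

instance : CompactSpace ↥NStar := isCompact_iff_compactSpace.mp isClosed_NStar.isCompact

lemma isOpen_starSet (A : Set ℕ) : IsOpen (starSet A) :=
  (ultrafilter_isOpen_basic A).preimage continuous_subtype_val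

lemma exists_basic_subset {S : Set ↥NStar} (hS : IsOpen S) {x : ↥NStar} (hx : x ∈ S) :
    ∃ B : Set ℕ, B ∈ (x : βN) ∧ starSet B ⊆ S := by
  have hb := isTopologicalBasis_subtype (ultrafilterBasis_is_basis (α := ℕ)) (· ∈ NStar)
  obtain ⟨v, hvB, hxv, hvS⟩ := hb.exists_subset_of_mem_open hx hS
  obtain ⟨w, hw, rfl⟩ := hvB
  obtain ⟨B, rfl⟩ := hw
  exact ⟨B, hxv, hvS⟩

/-- The finite-to-one collapsing map: preimages of `Nat.sqrt`. -/
def Cset (B : Set ℕ) : Set ℕ := Nat.sqrt ⁻¹' B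

lemma syndetic {R : Set βN} (hR : IsMinRightIdeal R) (hcl : IsPSetIn R) {S : Set ℕ} {q : βN}
    (hq : q ∈ R) (hS : S ∈ q) :
    ∃ s : Finset ℕ, (⋃ i ∈ s, dsub S i) ∈ FF R := by
  have hX : IsCompact (Subtype.val ⁻¹' R : Set ↥NStar) := hcl.2.1.isCompact
  have hcov : (Subtype.val ⁻¹' R : Set ↥NStar) ⊆ ⋃ i : ℕ, starSet (dsub S i) := by
    rintro ⟨p, hpN⟩ hp
    obtain ⟨p', hp'⟩ := min_trans hR hp hq
    have hmem : S ∈ addU p p' := by rw [hp']; exact hS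
    rw [mem_addU] at hmem
    obtain ⟨i, hi⟩ := Ultrafilter.nonempty_of_mem hmem
    exact Set.mem_iUnion.mpr ⟨i, hi⟩
  obtain ⟨t, ht⟩ := hX.elim_finite_subcover (fun i => starSet (dsub S i))
    (fun i => isOpen_starSet _) hcov
  refine ⟨t, fun p hp => ?_⟩
  have hpN : p ∈ NStar := hcl.1 hp
  have h2 := ht (show (⟨p, hpN⟩ : ↥NStar) ∈ _ from hp)
  simp only [Set.mem_iUnion] at h2
  obtain ⟨i, hit, hmem⟩ := h2
  exact Filter.mem_of_superset hmem (Set.subset_biUnion_of_mem hit)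

lemma dichotomy {R : Set βN} (hR : IsMinRightIdeal R) (hcl : IsPSetIn R) (B : Set ℕ) :
    Cset B ∈ FF R ∨ Cset Bᶜ ∈ FF R := by
  by_contra hcon
  push_neg at hcon
  obtain ⟨h1, h2⟩ := hcon
  simp only [FF, Set.mem_setOf_eq, not_forall] at h1 h2
  obtain ⟨q1, hq1R, hq1⟩ := h1
  obtain ⟨q2, hq2R, hq2⟩ := h2
  have m1 : Cset Bᶜ ∈ q1 := by
    have : (Cset B)ᶜ ∈ q1 := (Ultrafilter.compl_mem_iff_notMem).mpr hq1
    exact this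
  have m2 : Cset B ∈ q2 := by
    have h3 : (Cset Bᶜ)ᶜ ∈ q2 := (Ultrafilter.compl_mem_iff_notMem).mpr hq2
    have h4 : (Cset Bᶜ)ᶜ = Cset B := by
      simp [Cset, Set.preimage_compl]
    rwa [h4] at h3
  obtain ⟨s, hs⟩ := syndetic hR hcl hq1R m1
  obtain ⟨t, ht⟩ := syndetic hR hcl hq2R m2
  set N := s.sup id + t.sup id with hN
  have hinter : ((⋃ i ∈ s, dsub (Cset Bᶜ) i) ∩ (⋃ i ∈ t, dsub (Cset B) i)) ∈ FF R :=
    fun p hp => Filter.inter_mem (hs p hp) (ht p hp)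
  obtain ⟨n, hn⟩ := FF_thick hR hinter (N*N + (2*N+1))
  set x := n + N*N with hx
  have hIcc : Set.Icc x (x + (2*N+1)) ⊆
      ((⋃ i ∈ s, dsub (Cset Bᶜ) i) ∩ (⋃ i ∈ t, dsub (Cset B) i)) := by
    intro m hm
    apply hn
    simp only [Set.mem_Icc] at hm ⊢
    omega
  set k := Nat.sqrt x with hk
  have hNk : N ≤ k := Nat.le_sqrt.mpr (by omega)
  have hub : Nat.sqrt (x + (2*N+1)) ≤ k + 1 := by
    have hlt : x < (k+1)*(k+1) := Nat.lt_succ_sqrt x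
    have h5 : x + (2*N+1) < (k+2)*(k+2) := by nlinarith
    have := Nat.sqrt_lt.mpr h5
    omega
  have run : ∀ c v, c ∈ Set.Icc x (x + (2*N+1)) →
      (∀ j, j ≤ N → Nat.sqrt (c + j) = v) → False := by
    intro c v hc hv
    have hcA := hIcc hc
    by_cases hvB : v ∈ B
    · obtain ⟨i, his, hci⟩ := Set.mem_iUnion₂.mp hcA.1
      have hiN : i ≤ N := le_trans (Finset.le_sup (f := id) his) (Nat.le_add_right _ _)
      have hvi : Nat.sqrt (c+i) = v := hv i hiN
      have : Nat.sqrt (c+i) ∈ Bᶜ := hci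
      rw [hvi] at this
      exact this hvB
    · obtain ⟨i, hit2, hci⟩ := Set.mem_iUnion₂.mp hcA.2
      have hiN : i ≤ N := le_trans (Finset.le_sup (f := id) hit2) (Nat.le_add_left _ _)
      have hvi : Nat.sqrt (c+i) = v := hv i hiN
      have : Nat.sqrt (c+i) ∈ B := hci
      rw [hvi] at this
      exact hvB this
  by_cases hmid : Nat.sqrt (x + N) = k
  · refine run x k ⟨le_refl x, Nat.le_add_right _ _⟩ fun j hj => ?_
    have hj1 : k ≤ Nat.sqrt (x + j) := Nat.sqrt_le_sqrt (Nat.le_add_right _ _)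
    have hj2 : Nat.sqrt (x + j) ≤ k := hmid ▸ Nat.sqrt_le_sqrt (by omega)
    omega
  · have hsucc : Nat.sqrt (x + N) = k + 1 := by
      have hj1 : k ≤ Nat.sqrt (x+N) := Nat.sqrt_le_sqrt (Nat.le_add_right _ _)
      have hj2 : Nat.sqrt (x+N) ≤ k+1 := le_trans (Nat.sqrt_le_sqrt (by omega)) hub
      omega
    refine run (x + N) (k+1) ⟨Nat.le_add_right _ _, by omega⟩ fun j hj => ?_
    have hj1 : k+1 ≤ Nat.sqrt (x+N+j) := hsucc ▸ Nat.sqrt_le_sqrt (Nat.le_add_right _ _)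
    have hj2 : Nat.sqrt (x+N+j) ≤ k+1 := le_trans (Nat.sqrt_le_sqrt (by omega)) hub
    omega

lemma FF_pfilter {R : Set βN} (hcl : IsPSetIn R)
    (Aseq : ℕ → Set ℕ) (hA : ∀ n, Aseq n ∈ FF R) :
    ∃ A ∈ FF R, ∀ n, (A \ Aseq n).Finite := by
  classical
  set X : Set ↥NStar := Subtype.val ⁻¹' R with hXdef
  have hsub : X ⊆ interior (⋂₀ (Set.range fun n => starSet (Aseq n))) := by
    apply hcl.2.2 _ (Set.countable_range _)
    rintro U ⟨n, rfl⟩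
    exact ⟨isOpen_starSet _, fun p hp => hA n p.1 hp⟩
  have key : ∀ p : ↥X, ∃ B : Set ℕ,
      B ∈ (p.1 : βN) ∧ starSet B ⊆ ⋂₀ (Set.range fun n => starSet (Aseq n)) := by
    intro p
    obtain ⟨B, hB1, hB2⟩ := exists_basic_subset isOpen_interior (hsub p.2)
    exact ⟨B, hB1, hB2.trans interior_subset⟩
  choose Bf hBmem hBsub using key
  have hcov : X ⊆ ⋃ p : ↥X, starSet (Bf p) := fun p hp =>
    Set.mem_iUnion.mpr ⟨⟨p, hp⟩, hBmem ⟨p, hp⟩⟩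
  obtain ⟨t, ht⟩ := (hcl.2.1.isCompact).elim_finite_subcover _
    (fun p => isOpen_starSet (Bf p)) hcov
  refine ⟨⋃ p ∈ t, Bf p, ?_, ?_⟩
  · intro r hr
    have hrX : (⟨r, hcl.1 hr⟩ : ↥NStar) ∈ X := hr
    have h6 := ht hrX
    simp only [Set.mem_iUnion] at h6
    obtain ⟨p, hpt, hmem⟩ := h6
    exact Filter.mem_of_superset hmem (Set.subset_biUnion_of_mem hpt)
  · intro n
    have hfin : ∀ p : ↥X, (Bf p \ Aseq n).Finite := by
      intro p
      by_contra hinf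
      obtain ⟨qq, hqN, hqmem⟩ := exists_free hinf
      have hq1 : Bf p ∈ qq := Filter.mem_of_superset hqmem Set.diff_subset
      have hq2 : (⟨qq, hqN⟩ : ↥NStar) ∈ starSet (Bf p) := hq1
      have hq3 := hBsub p hq2
      have hq4 : Aseq n ∈ qq := hq3 _ ⟨n, rfl⟩
      have hq5 : (Aseq n)ᶜ ∈ qq := Filter.mem_of_superset hqmem fun a ha => ha.2
      exact (Ultrafilter.compl_mem_iff_notMem.mp hq5) hq4
    apply (Set.Finite.biUnion t.finite_toSet (fun p _ => hfin p)).subset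
    rintro m ⟨hmA, hmn⟩
    simp only [Set.mem_iUnion] at hmA ⊢
    obtain ⟨p, hpt, hmem⟩ := hmA
    exact ⟨p, hpt, hmem, hmn⟩

lemma wExists {R : Set βN} (hR : IsMinRightIdeal R) (hcl : IsPSetIn R) :
    ∃ w : βN, ∀ B : Set ℕ, B ∈ w ↔ Cset B ∈ FF R := by
  have hmono : ∀ {B B' : Set ℕ}, B ⊆ B' → Cset B ∈ FF R → Cset B' ∈ FF R :=
    fun h hB p hp => Filter.mem_of_superset (hB p hp) (Set.preimage_mono h)
  refine ⟨Ultrafilter.ofComplNotMemIff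
    { sets := {B | Cset B ∈ FF R}
      univ_sets := fun p _ => Filter.univ_mem
      sets_of_superset := fun hB h => hmono h hB
      inter_sets := fun hB hC => fun p hp => Filter.inter_mem (hB p hp) (hC p hp) } ?_,
    fun B => Iff.rfl⟩
  intro s
  constructor
  · intro hns
    rcases dichotomy hR hcl s with h | h
    · exact h
    · exact absurd (show sᶜ ∈ ({B | Cset B ∈ FF R} : Set (Set ℕ)) from h) hns
  · intro hs hcs
    obtain ⟨r, hr⟩ := hR.1
    have h1 : Cset s ∈ r := hs r hr
    have h2 : (Cset s)ᶜ ∈ r := hcs r hr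
    exact (Ultrafilter.compl_mem_iff_notMem.mp h2) h1

lemma Cset_finite {T : Set ℕ} (hT : T.Finite) : (Cset T).Finite := by
  have hss : Cset T ⊆ ⋃ kk ∈ T, Set.Iio ((kk+1)*(kk+1)) := by
    intro m hm
    exact Set.mem_biUnion hm (Nat.lt_succ_sqrt m)
  exact (hT.biUnion fun kk _ => Set.finite_Iio _).subset hss

lemma thick_not_finite {A : Set ℕ} (hA : Thick A) (hfin : A.Finite) : False := by
  obtain ⟨M, hM⟩ := hfin.bddAbove
  obtain ⟨n, hn⟩ := hA (M+1)
  have h1 : n + (M+1) ∈ A := hn (by simp [Set.mem_Icc])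
  have := hM h1
  omega

lemma w_free {R : Set βN} (hR : IsMinRightIdeal R) {w : βN}
    (hw : ∀ B, B ∈ w ↔ Cset B ∈ FF R) : w ∈ NStar := by
  intro S hS
  rw [Filter.mem_cofinite] at hS
  rw [Ultrafilter.mem_coe]
  by_contra hSw
  have h1 : Sᶜ ∈ w := (Ultrafilter.compl_mem_iff_notMem).mpr hSw
  have h2 : Cset Sᶜ ∈ FF R := (hw _).mp h1
  exact thick_not_finite (FF_thick hR h2) (Cset_finite hS)

end Stmt8

/-- If some minimal right ideal of `(βℕ, +)` is a `P`-set in `ℕ*`,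
then there is a `P`-point in `ℕ*`. -/
theorem stmt8 (h : ∃ I : Set βN, IsMinRightIdeal I ∧ IsPSetIn I) :
    ∃ x : ↥NStar, IsPSetSub {x} := by
  obtain ⟨R, hR, hcl⟩ := h
  obtain ⟨w, hw⟩ := Stmt8.wExists hR hcl
  have hwN : w ∈ NStar := Stmt8.w_free hR hw
  refine ⟨⟨w, hwN⟩, isClosed_singleton, ?_⟩
  intro 𝒜 hcount hU
  intro y hy
  rw [Set.mem_singleton_iff] at hy
  subst hy
  rcases Set.eq_empty_or_nonempty 𝒜 with rfl | hne
  · simp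
  obtain ⟨f, rfl⟩ := hcount.exists_eq_range hne
  have key : ∀ n : ℕ, ∃ B : Set ℕ, B ∈ w ∧ starSet B ⊆ f n := by
    intro n
    have hopen := (hU (f n) ⟨n, rfl⟩).1
    have hxin : (⟨w, hwN⟩ : ↥NStar) ∈ f n := (hU (f n) ⟨n, rfl⟩).2 rfl
    exact Stmt8.exists_basic_subset hopen hxin
  choose Bf hBw hBsub using key
  have hCF : ∀ n, Stmt8.Cset (Bf n) ∈ Stmt8.FF R := fun n => (hw _).mp (hBw n)
  obtain ⟨A, hAF, hAfin⟩ := Stmt8.FF_pfilter hcl _ hCF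
  have hBmemw : Nat.sqrt '' A ∈ w := by
    rw [hw]
    exact fun p hp => Filter.mem_of_superset (hAF p hp) (Set.subset_preimage_image _ _)
  have hBdiff : ∀ n, ((Nat.sqrt '' A) \ Bf n).Finite := by
    intro n
    apply ((hAfin n).image Nat.sqrt).subset
    rintro kk ⟨⟨m, hmA, rfl⟩, hk⟩
    exact ⟨m, ⟨hmA, fun hmem => hk hmem⟩, rfl⟩
  have hxB : (⟨w, hwN⟩ : ↥NStar) ∈ starSet (Nat.sqrt '' A) := hBmemw
  have hsub2 : starSet (Nat.sqrt '' A) ⊆ ⋂₀ Set.range f := by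
    rintro p hp
    rintro _ ⟨n, rfl⟩
    apply hBsub n
    have h1 : Nat.sqrt '' A ∈ (p.1 : βN) := hp
    have h2 : ((Nat.sqrt '' A) \ Bf n)ᶜ ∈ (p.1 : βN) := p.2 ((hBdiff n).compl_mem_cofinite)
    refine Filter.mem_of_superset (Filter.inter_mem h1 h2) ?_
    rintro a ⟨haB, hac⟩
    by_contra hnotin
    exact hac ⟨haB, hnotin⟩
  exact interior_maximal hsub2 (Stmt8.isOpen_starSet _) hxB


end
end

section
/- (In ZFC) There is a nonempty, nowhere dense P-set X ⊆ ℕ* such that σ(X) = X. In particular, there is a nowhere dense P-set that is also a closed right ideal of (βℕ, +). -/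
open Filter Set Topology

noncomputable section

/-!
Let `F` be the dual filter of the summable ideal `{C ⊆ ℕ | ∑_{n ∈ C} 1/(n+1) < ∞}` and take
`X = F*`, the set of ultrafilters extending `F`; it is closed, and nonempty because the harmonic
series diverges. Countably many summable sets are almost contained in a single summable set, so
`F` is a P-filter; as every neighbourhood of `X` in the compact space `ℕ*` contains some `A*` with
`A ∈ F`, this makes `X` a P-set. Every infinite set has an infinite summable subset, which makes
`X` nowhere dense. Finally, `n ↦ n ± 1` changes the weights `1/(n+1)` by at most a factor `2`, so
`F` is invariant under translation; hence `σ(X) = X`, and `X` is a right ideal since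
`A ∈ F → A − n ∈ F`.
-/

open scoped ENNReal NNReal

lemma mem_filterStar_iff {F : Filter ℕ} {p : βN} : p ∈ filterStar F ↔ (p : Filter ℕ) ≤ F := by
  simp only [filterStar, mem_iInter₂, mem_ofPred_eq]
  rfl

lemma isClosed_filterStar (F : Filter ℕ) : IsClosed (filterStar F) :=
  isClosed_biInter fun A _ => ultrafilter_isClosed_basic A

lemma isClosed_preimage_filterStar (F : Filter ℕ) :
    IsClosed (Subtype.val ⁻¹' filterStar F : Set NStar) :=
  (isClosed_filterStar F).preimage continuous_subtype_val

lemma filterStar_nonempty (F : Filter ℕ) [F.NeBot] : (filterStar F).Nonempty :=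
  let ⟨p, hp⟩ := Ultrafilter.exists_le F
  ⟨p, mem_filterStar_iff.2 hp⟩

lemma filterStar_subset_NStar {F : Filter ℕ} (hF : F ≤ cofinite) : filterStar F ⊆ NStar :=
  fun _ hp => (mem_filterStar_iff.1 hp).trans hF

lemma filterStar_cofinite : filterStar cofinite = NStar := by
  ext p
  exact mem_filterStar_iff

instance : CompactSpace NStar :=
  isCompact_iff_compactSpace.1 (filterStar_cofinite ▸ isClosed_filterStar cofinite).isCompact

lemma isOpen_starSet (A : Set ℕ) : IsOpen (starSet A) :=
  (ultrafilter_isOpen_basic A).preimage continuous_subtype_val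

lemma isClosed_starSet (A : Set ℕ) : IsClosed (starSet A) :=
  (ultrafilter_isClosed_basic A).preimage continuous_subtype_val

lemma starSet_inter (A B : Set ℕ) : starSet (A ∩ B) = starSet A ∩ starSet B := by
  ext p
  exact Filter.inter_mem_iff

lemma starSet_subset_of_almostSub {A B : Set ℕ} (h : almostSub A B) : starSet A ⊆ starSet B :=
  fun p hA => (p : βN).mem_of_superset (inter_mem hA (p.2 h.compl_mem_cofinite))
    fun _ ⟨hA, hAB⟩ => by_contra fun hB => hAB ⟨hA, hB⟩

lemma isTopologicalBasis_starSet : TopologicalSpace.IsTopologicalBasis (range starSet) := by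
  convert ultrafilterBasis_is_basis.isInducing Topology.IsInducing.subtypeVal
  ext U
  simp [ultrafilterBasis, starSet, eq_comm]

lemma preimage_filterStar (F : Filter ℕ) :
    Subtype.val ⁻¹' filterStar F = ⋂ A : F.sets, starSet A := by
  ext p
  simp [mem_filterStar_iff, starSet, Filter.le_def]

/-- Compactness of `ℕ*`: `ℕ* ∩ F*` is the intersection of the directed family of clopen sets
`A*`, `A ∈ F`. -/
lemma exists_starSet_subset {F : Filter ℕ} {U : Set NStar} (hU : IsOpen U)
    (hFU : Subtype.val ⁻¹' filterStar F ⊆ U) : ∃ A ∈ F, starSet A ⊆ U := by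
  have hdir : Directed (· ⊇ ·) fun A : F.sets => starSet A := fun A B =>
    ⟨⟨A ∩ B, inter_mem A.2 B.2⟩, by simp [starSet_inter]⟩
  obtain ⟨A, hA⟩ := exists_subset_nhds_of_isCompact' hdir
    (fun A => (isClosed_starSet A).isCompact) (fun A => isClosed_starSet A)
    (fun x hx => hU.mem_nhds (hFU (preimage_filterStar F ▸ hx)))
  exact ⟨A, A.2, hA⟩

def IsPFilter (F : Filter ℕ) : Prop :=
  ∀ A : ℕ → Set ℕ, (∀ i, A i ∈ F) → ∃ B ∈ F, ∀ i, almostSub B (A i)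

lemma isPSetSub_filterStar {F : Filter ℕ} (hF : IsPFilter F) :
    IsPSetSub (Subtype.val ⁻¹' filterStar F) := by
  refine ⟨isClosed_preimage_filterStar F, fun 𝒜 h𝒜 hopen => ?_⟩
  rcases 𝒜.eq_empty_or_nonempty with rfl | hne
  · simp
  obtain ⟨U, rfl⟩ := h𝒜.exists_eq_range hne
  choose A hAF hAU using fun i => exists_starSet_subset (hopen _ (mem_range_self i)).1
    (hopen _ (mem_range_self i)).2
  obtain ⟨B, hBF, hBA⟩ := hF A hAF
  have hB : starSet B ⊆ ⋂₀ range U := by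
    rintro p hp _ ⟨i, rfl⟩
    exact hAU i (starSet_subset_of_almostSub (hBA i) hp)
  exact fun p hp => interior_maximal hB (isOpen_starSet B) (mem_filterStar_iff.1 hp hBF)

lemma isNowhereDense_filterStar {F : Filter ℕ}
    (hF : ∀ A : Set ℕ, A.Infinite → ∃ B ⊆ A, B.Infinite ∧ Bᶜ ∈ F) :
    IsNowhereDense (Subtype.val ⁻¹' filterStar F : Set NStar) := by
  rw [(isClosed_preimage_filterStar F).isNowhereDense_iff, eq_empty_iff_forall_notMem]
  intro q hq
  obtain ⟨_, ⟨A, rfl⟩, hqA, hAF⟩ :=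
    isTopologicalBasis_starSet.exists_subset_of_mem_open hq isOpen_interior
  have hA : A.Infinite := fun hfin =>
    (q : βN).compl_mem_iff_notMem.1 (q.2 hfin.compl_mem_cofinite) hqA
  obtain ⟨B, hBA, hB, hBF⟩ := hF A hA
  have := hB.cofinite_inf_principal_neBot
  obtain ⟨u, hu⟩ := Ultrafilter.exists_le (cofinite ⊓ 𝓟 B)
  have huB : B ∈ u := hu (mem_inf_of_right (mem_principal_self B))
  have huF : (⟨u, hu.trans inf_le_left⟩ : NStar) ∈ Subtype.val ⁻¹' filterStar F :=
    interior_subset (hAF (u.mem_of_superset huB hBA))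
  exact u.compl_mem_iff_notMem.1 (mem_filterStar_iff.1 huF hBF) huB

lemma shift_image_filterStar {F : Filter ℕ} (hF : F ≤ cofinite) (hsucc : Tendsto (· + 1) F F)
    (hpred : Tendsto (· - 1) F F) : shift '' filterStar F = filterStar F := by
  refine (image_subset_iff.2 fun p hp => ?_).antisymm fun p hp => ?_
  · exact mem_filterStar_iff.2 ((map_mono (mem_filterStar_iff.1 hp)).trans hsucc)
  have hpF := mem_filterStar_iff.1 hp
  refine ⟨p.map (· - 1), mem_filterStar_iff.2 ((map_mono hpF).trans hpred), ?_⟩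
  have hsub_add : ∀ᶠ n in (p : Filter ℕ), n - 1 + 1 = n :=
    (hpF.trans hF) ((eventually_cofinite_ne 0).mono fun n hn =>
      Nat.sub_add_cancel (Nat.one_le_iff_ne_zero.2 hn))
  apply Ultrafilter.coe_injective
  simp only [shift, Ultrafilter.coe_map, map_map]
  exact (map_congr hsub_add).trans map_id

lemma isRightIdeal_filterStar {F : Filter ℕ} (hsucc : Tendsto (· + 1) F F) :
    IsRightIdeal (filterStar F) := by
  intro p hp q
  have hadd : ∀ n, Tendsto (· + n) F F := fun n => by
    simpa [add_right_iterate] using hsucc.iterate n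
  refine mem_filterStar_iff.2 fun A hA => ?_
  show A ∈ (q : Filter ℕ).bind fun n => p.map (· + n)
  exact mem_bind'.2 (univ_mem' fun n => (map_mono (mem_filterStar_iff.1 hp)).trans (hadd n) hA)

section SummableIdeal

variable {w : ℕ → ℝ≥0∞}

/-- The dual filter of the summable ideal `{C | ∑_{n ∈ C} w n < ∞}`. -/
def summableDual (w : ℕ → ℝ≥0∞) : Filter ℕ :=
  comk (fun C => ∑' n : C, w n ≠ ∞) (by simp)
    (fun _ hC _ hDC => ne_top_of_le_ne_top hC (ENNReal.tsum_mono_subtype w hDC))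
    (fun C hC D hD => ne_top_of_le_ne_top (ENNReal.add_ne_top.2 ⟨hC, hD⟩)
      (ENNReal.tsum_union_le w C D))

lemma mem_summableDual {A : Set ℕ} : A ∈ summableDual w ↔ ∑' n : ↥Aᶜ, w n ≠ ∞ :=
  mem_comk

lemma summableDual_le_cofinite (hw : ∀ n, w n ≠ ∞) : summableDual w ≤ cofinite := by
  intro A hA
  have := (hA : Aᶜ.Finite).fintype
  rw [mem_summableDual, tsum_fintype]
  exact ENNReal.sum_ne_top.2 fun n _ => hw n

lemma summableDual_neBot (hw : ∑' n, w n = ∞) : (summableDual w).NeBot :=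
  ⟨fun h => mem_summableDual.1 (h ▸ mem_bot : ∅ ∈ summableDual w)
    (by rwa [compl_empty, tsum_univ])⟩

lemma isPFilter_summableDual : IsPFilter (summableDual w) := by
  intro A hA
  have htail i := (ENNReal.tendsto_tsum_compl_atTop_zero (mem_summableDual.1 (hA i))).eventually
    (eventually_le_nhds (ENNReal.pow_pos (by norm_num : (0 : ℝ≥0∞) < 2⁻¹) i))
  choose s hs using fun i => (htail i).exists
  set D := ⋃ i, range fun b : {x // x ∉ s i} => (b : ℕ)
  refine ⟨Dᶜ, mem_summableDual.2 (ne_top_of_le_ne_top (ENNReal.ofNat_ne_top (n := 2)) ?_),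
    fun i => ?_⟩
  · calc ∑' n : ↥Dᶜᶜ, w n
        ≤ ∑' i, ∑' n : ↥(range fun b : {x // x ∉ s i} => (b : ℕ)), w n := by
          rw [compl_compl]; exact ENNReal.tsum_iUnion_le_tsum w _
      _ ≤ ∑' i : ℕ, 2⁻¹ ^ i := ENNReal.tsum_le_tsum fun i => by
          rw [tsum_range (g := fun b : {x // x ∉ s i} => (b : ℕ)) w
            (Subtype.val_injective.comp Subtype.val_injective)]
          exact hs i
      _ = 2 := ENNReal.tsum_geometric_two
  · refine ((s i).finite_toSet.image Subtype.val).subset fun n ⟨hnD, hnA⟩ =>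
      by_contra fun hns => ?_
    exact hnD (mem_iUnion.2 ⟨i, ⟨⟨n, hnA⟩, fun h => hns ⟨_, h, rfl⟩⟩, rfl⟩)

lemma exists_infinite_compl_mem_summableDual (hw : Tendsto w atTop (𝓝 0)) {A : Set ℕ}
    (hA : A.Infinite) : ∃ B ⊆ A, B.Infinite ∧ Bᶜ ∈ summableDual w := by
  have hsmall k := hw.eventually
    (eventually_le_nhds (ENNReal.pow_pos (by norm_num : (0 : ℝ≥0∞) < 2⁻¹) k))
  choose a ha using fun k : ℕ => ((Nat.frequently_atTop_iff_infinite.2 hA).and_eventually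
    ((hsmall k).and (eventually_gt_atTop k))).exists
  refine ⟨range a, range_subset_iff.2 fun k => (ha k).1,
    infinite_of_forall_exists_gt fun k => ⟨a k, mem_range_self k, (ha k).2.2⟩,
    mem_summableDual.2 (ne_top_of_le_ne_top (ENNReal.ofNat_ne_top (n := 2)) ?_)⟩
  calc ∑' n : ↥(range a)ᶜᶜ, w n
      ≤ ∑' k, w (a k) := by
        rw [compl_compl]
        exact ENNReal.tsum_le_tsum_comp_of_surjective rangeFactorization_surjective _
    _ ≤ ∑' k : ℕ, 2⁻¹ ^ k := ENNReal.tsum_le_tsum fun k => (ha k).2.1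
    _ = 2 := ENNReal.tsum_geometric_two

lemma tendsto_summableDual {g : ℕ → ℕ}
    (hg : ∀ C : Set ℕ, ∑' n : C, w n ≠ ∞ → ∑' n : ↥(g ⁻¹' C), w n ≠ ∞) :
    Tendsto g (summableDual w) (summableDual w) := fun _ hA =>
  mem_summableDual.2 (hg _ (mem_summableDual.1 hA))

lemma tendsto_add_one_summableDual {c : ℝ≥0∞} (hc : c ≠ ∞) (hw : ∀ n, w n ≤ c * w (n + 1)) :
    Tendsto (· + 1) (summableDual w) (summableDual w) :=
  tendsto_summableDual fun C hC => ne_top_of_le_ne_top (ENNReal.mul_ne_top hc hC) <| calc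
    ∑' n : ↥((· + 1) ⁻¹' C), w n ≤ ∑' n : ↥((· + 1) ⁻¹' C), c * w ((n : ℕ) + 1) :=
        ENNReal.tsum_le_tsum fun n => hw n
    _ = c * ∑' n : ↥((· + 1) '' ((· + 1) ⁻¹' C)), w n := by
        rw [ENNReal.tsum_mul_left, tsum_image _ (add_left_injective 1).injOn]
    _ ≤ c * ∑' n : C, w n := by
        gcongr; exact ENNReal.tsum_mono_subtype w (image_preimage_subset _ _)

lemma tendsto_sub_one_summableDual (hw₀ : w 0 ≠ ∞) (hw : ∀ n, w (n + 1) ≤ w n) :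
    Tendsto (· - 1) (summableDual w) (summableDual w) :=
  tendsto_summableDual fun C hC => ne_top_of_le_ne_top (ENNReal.add_ne_top.2 ⟨hw₀, hC⟩) <| calc
    ∑' n : ↥((· - 1) ⁻¹' C), w n ≤ ∑' n : ↥({0} ∪ (· + 1) '' C), w n :=
        ENNReal.tsum_mono_subtype w fun n hn =>
          (Nat.eq_zero_or_pos n).imp id fun h => ⟨n - 1, hn, Nat.sub_add_cancel h⟩
    _ ≤ ∑' n : ↥({0} : Set ℕ), w n + ∑' n : ↥((· + 1) '' C), w n :=
        ENNReal.tsum_union_le _ _ _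
    _ = w 0 + ∑' n : C, w (n + 1) := by
        rw [tsum_singleton, tsum_image _ (add_left_injective 1).injOn]
    _ ≤ w 0 + ∑' n : C, w n := by gcongr with n; exact hw n

end SummableIdeal

def harmonicWeight (n : ℕ) : ℝ≥0∞ := ((n : ℝ≥0∞) + 1)⁻¹

lemma harmonicWeight_ne_top (n : ℕ) : harmonicWeight n ≠ ∞ := by
  simp [harmonicWeight]

lemma tsum_harmonicWeight : ∑' n, harmonicWeight n = ∞ := by
  have h : ¬Summable fun n : ℕ => ((n : ℝ) + 1)⁻¹ := by
    simpa using (summable_nat_add_iff 1).not.2 Real.not_summable_natCast_inv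
  simpa [harmonicWeight, ENNReal.coe_inv] using
    (ENNReal.tsum_coe_eq_top_iff_not_summable_coe (f := fun n : ℕ => ((n : ℝ≥0) + 1)⁻¹)).2
      (by simpa using h)

lemma tendsto_harmonicWeight : Tendsto harmonicWeight atTop (𝓝 0) := by
  show Tendsto (fun n : ℕ => ((n : ℝ≥0∞) + 1)⁻¹) atTop (𝓝 0)
  simpa using (tendsto_add_atTop_iff_nat 1).2 ENNReal.tendsto_inv_nat_nhds_zero

lemma harmonicWeight_succ_le (n : ℕ) : harmonicWeight (n + 1) ≤ harmonicWeight n :=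
  ENNReal.inv_le_inv.2 (by gcongr; exact n.le_succ)

lemma harmonicWeight_le_two_mul_succ (n : ℕ) :
    harmonicWeight n ≤ 2 * harmonicWeight (n + 1) := by
  rw [harmonicWeight, harmonicWeight, ← div_eq_mul_inv,
    ENNReal.le_div_iff_mul_le (by simp) (by simp), mul_comm, ← div_eq_mul_inv,
    ENNReal.div_le_iff (by simp) (by simp), two_mul]
  push_cast
  gcongr
  exact le_add_self

/-- (ZFC) There is a nonempty, nowhere dense `P`-set `X ⊆ ℕ*` with
`σ(X) = X`; in particular there is a nowhere dense `P`-set that is also a closed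
right ideal of `(βℕ, +)`. -/
theorem stmt12 :
    (∃ X : Set βN, X.Nonempty ∧ IsPSetIn X ∧
      IsNowhereDense (Subtype.val ⁻¹' X : Set ↥NStar) ∧ shift '' X = X) ∧
    (∃ Y : Set βN, Y.Nonempty ∧ IsPSetIn Y ∧
      IsNowhereDense (Subtype.val ⁻¹' Y : Set ↥NStar) ∧
      IsRightIdeal Y ∧ IsClosed (Subtype.val ⁻¹' Y : Set ↥NStar)) := by
  set F := summableDual harmonicWeight
  have hF : F ≤ cofinite := summableDual_le_cofinite harmonicWeight_ne_top
  have : F.NeBot := summableDual_neBot tsum_harmonicWeight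
  have hsucc : Tendsto (· + 1) F F :=
    tendsto_add_one_summableDual ENNReal.ofNat_ne_top harmonicWeight_le_two_mul_succ
  have hpred : Tendsto (· - 1) F F :=
    tendsto_sub_one_summableDual (harmonicWeight_ne_top 0) harmonicWeight_succ_le
  have hP : IsPSetIn (filterStar F) :=
    ⟨filterStar_subset_NStar hF, isPSetSub_filterStar isPFilter_summableDual⟩
  have hnwd := isNowhereDense_filterStar fun _ =>
    exists_infinite_compl_mem_summableDual (w := harmonicWeight) tendsto_harmonicWeight
  exact ⟨⟨_, filterStar_nonempty F, hP, hnwd, shift_image_filterStar hF hsucc hpred⟩,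
    ⟨_, filterStar_nonempty F, hP, hnwd, isRightIdeal_filterStar hsucc,
      isClosed_preimage_filterStar F⟩⟩

end
end

section
/- Let X be a compact Hausdorff space and f : X → X continuous. Then (X, f) fails to be chain transitive if and only if there is a nonempty open set U ≠ X and a closed set C ⊆ U such that f(U) ⊆ C. -/
open Filter Set Topology

noncomputable section

/-- A dynamical system `(X, f)` on a compact Hausdorff space fails
to be chain transitive iff there are a nonempty open `U ≠ X` and a closed `C ⊆ U`
with `f(U) ⊆ C`. -/
theorem stmt14 {X : Type*} [TopologicalSpace X] [CompactSpace X] [T2Space X]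
    (f : X → X) (hf : Continuous f) :
    ¬ ChainTransitive f ↔
      ∃ U C : Set X, IsOpen U ∧ U.Nonempty ∧ U ≠ Set.univ ∧
        IsClosed C ∧ C ⊆ U ∧ f '' U ⊆ C := by
  constructor
  · -- forward: contrapositive
    intro hnt
    by_contra hno
    apply hnt
    intro 𝒰 hop hcov x y
    -- reachable set
    set A : Set X := ⋃₀ {U ∈ 𝒰 | ∃ n : ℕ, ∃ c : ℕ → X, c 0 = x ∧
      (∀ i < n, ∃ V ∈ 𝒰, f (c i) ∈ V ∧ c (i + 1) ∈ V) ∧ f (c n) ∈ U} with hA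
    -- extension lemma
    have ext : ∀ a ∈ A, ∀ V ∈ 𝒰, f a ∈ V → V ⊆ A := by
      rintro a ⟨U, ⟨hU𝒰, n, c, hc0, hch, hfn⟩, haU⟩ V hV𝒰 hfa z hz
      refine ⟨V, ⟨hV𝒰, n + 1, fun i => if i ≤ n then c i else a, ?_, ?_, ?_⟩, hz⟩
      · simp [hc0]
      · intro i hi
        rcases Nat.lt_or_ge i n with hin | hin
        · obtain ⟨W, hW𝒰, hfW, hcW⟩ := hch i hin
          refine ⟨W, hW𝒰, ?_, ?_⟩
          · simpa [Nat.le_of_lt hin] using hfW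
          · simpa [Nat.succ_le_of_lt hin] using hcW
        · have hieq : i = n := Nat.le_antisymm (Nat.lt_succ_iff.mp hi) hin
          subst hieq
          exact ⟨U, hU𝒰, by simpa using hfn, by simpa using haU⟩
      · simp [hfa]
    have hAopen : IsOpen A := by
      apply isOpen_sUnion
      rintro U ⟨hU𝒰, -⟩
      exact hop U hU𝒰
    have hAne : A.Nonempty := by
      have : f x ∈ ⋃₀ 𝒰 := by rw [hcov]; trivial
      obtain ⟨U, hU𝒰, hfx⟩ := this
      refine ⟨f x, U, ⟨hU𝒰, 0, fun _ => x, rfl, by omega, hfx⟩, hfx⟩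
    have hclos : closure (f '' A) ⊆ A := by
      intro w hw
      have hwcov : w ∈ ⋃₀ 𝒰 := by rw [hcov]; trivial
      obtain ⟨V, hV𝒰, hwV⟩ := hwcov
      have : (V ∩ f '' A).Nonempty :=
        (mem_closure_iff.mp hw) V (hop V hV𝒰) hwV |>.imp (fun z hz => ⟨hz.1, hz.2⟩) |>.elim
          fun z hz => ⟨z, hz⟩
      obtain ⟨z, hzV, a, haA, rfl⟩ := this
      exact ext a haA V hV𝒰 hzV hwV
    have hAuniv : A = Set.univ := by
      by_contra hAne'
      exact hno ⟨A, closure (f '' A), hAopen, hAne, hAne', isClosed_closure, hclos,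
        subset_closure⟩
    -- y ∈ A: extract chain to y
    have hy : y ∈ A := by rw [hAuniv]; trivial
    obtain ⟨U, ⟨hU𝒰, n, c, hc0, hch, hfn⟩, hyU⟩ := hy
    refine ⟨n + 1, fun i => if i ≤ n then c i else y, by simp [Nat.zero_le, hc0], by simp, ?_⟩
    intro i hi
    rcases Nat.lt_or_ge i n with hin | hin
    · obtain ⟨W, hW𝒰, hfW, hcW⟩ := hch i hin
      refine ⟨W, hW𝒰, ?_, ?_⟩
      · simpa [Nat.le_of_lt hin] using hfW
      · simpa [Nat.succ_le_of_lt hin] using hcW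
    · have hieq : i = n := Nat.le_antisymm (Nat.lt_succ_iff.mp hi) hin
      subst hieq
      exact ⟨U, hU𝒰, by simpa using hfn, by simpa using hyU⟩
  · -- backward
    rintro ⟨U, C, hUo, ⟨x, hxU⟩, hUne, hCc, hCU, hfUC⟩ hct
    obtain ⟨y, hy⟩ : ∃ y, y ∉ U := by
      by_contra h
      push_neg at h
      exact hUne (Set.eq_univ_of_forall h)
    have hcov : ⋃₀ ({U, Cᶜ} : Set (Set X)) = Set.univ := by
      apply Set.eq_univ_of_forall
      intro z
      by_cases hz : z ∈ C
      · exact ⟨U, Or.inl rfl, hCU hz⟩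
      · exact ⟨Cᶜ, Or.inr rfl, hz⟩
    obtain ⟨n, c, hc0, hcn, hch⟩ := hct {U, Cᶜ}
      (by rintro V (rfl | rfl); exacts [hUo, hCc.isOpen_compl]) hcov x y
    have key : ∀ i ≤ n, c i ∈ U := by
      intro i hi
      induction i with
      | zero => rw [hc0]; exact hxU
      | succ k ih =>
        have hk : k ≤ n := Nat.le_of_succ_le hi
        have hkU : c k ∈ U := ih hk
        obtain ⟨V, hV, hfV, hcV⟩ := hch k (Nat.lt_of_succ_le hi)
        rcases hV with rfl | rfl
        · exact hcV
        · exact absurd (hfUC ⟨c k, hkU, rfl⟩) hfV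
    exact hy (hcn ▸ key n le_rfl)

end
end
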